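/- arXiv:2303.04752 — 7 statements merged into one kernel-verified Lean document; each statement's English description precedes it below -/
import Mathlib

section
/- There exists a constant C > 0 such that for all real numbers a > b ≥ 0 and all ε ∈ (0,1): P(D₁ ≤ ε^a and D₂ ≤ ε^b) ≤ C · ε^{a+2b}. -/
open MeasureTheory ProbabilityTheory Real Filter

/-- Density of the Beta distribution `β(u,v)` with respect to Lebesgue measure. -/
noncomputable def betaPDFReal (u v x : ℝ) : ℝ :=
  if 0 < x ∧ x < 1 then
    Real.Gamma (u + v) / (Real.Gamma u * Real.Gamma v) * x ^ (u - 1) * (1 - x) ^ (v - 1)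
  else 0

/-- The Beta distribution `β(u,v)` on `ℝ`. -/
noncomputable def betaMeasure (u v : ℝ) : Measure ℝ :=
  volume.withDensity fun x => ENNReal.ofReal (_root_.betaPDFReal u v x)

/-- Density of the generalized Gamma distribution `GG(u,v)` w.r.t. Lebesgue measure. -/
noncomputable def genGammaPDFReal (u v x : ℝ) : ℝ :=
  if 0 < x then v / Real.Gamma (u / v) * x ^ (u - 1) * Real.exp (-(x ^ v)) else 0

/-- The generalized Gamma distribution `GG(u,v)` on `ℝ`. -/
noncomputable def genGammaMeasure (u v : ℝ) : Measure ℝ :=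
  volume.withDensity fun x => ENNReal.ofReal (genGammaPDFReal u v x)

/-! Put `W = B₂ Z₃`. On the event, `W = D₁ + D₂ ≤ 2 ε ^ b` and `B₁ ≤ ε ^ a / W`; since
`P(B₁ ≤ t) ≤ 2 t` and `B₁` is independent of `W`, the probability is at most
`2 ε ^ a E[W⁻¹; W ≤ 2 ε ^ b]`. Integrating out `B₂ ~ β(3,1)` first gives
`E[W⁻¹; W ≤ δ | Z₃] ≤ 3 δ² Z₃⁻³`, and `E[Z₃⁻³] = 1 / Γ(5/2)` is finite. -/

open Set

lemma measurable_betaPDFReal (u v : ℝ) : Measurable (_root_.betaPDFReal u v) := by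
  unfold _root_.betaPDFReal
  exact Measurable.ite measurableSet_Ioo (by fun_prop) measurable_const

lemma measurable_genGammaPDFReal (u v : ℝ) : Measurable (genGammaPDFReal u v) := by
  unfold genGammaPDFReal
  exact Measurable.ite measurableSet_Ioi (by fun_prop) measurable_const

instance (u v : ℝ) : SFinite (_root_.betaMeasure u v) := by
  unfold _root_.betaMeasure; infer_instance

instance (u v : ℝ) : SFinite (genGammaMeasure u v) := by
  unfold genGammaMeasure; infer_instance

lemma ae_pos_withDensity_ofReal {f : ℝ → ℝ} (hf : Measurable f) (h : ∀ x ≤ 0, f x = 0) :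
    ∀ᵐ x ∂volume.withDensity (fun x => ENNReal.ofReal (f x)), 0 < x := by
  rw [ae_withDensity_iff hf.ennreal_ofReal]
  refine ae_of_all _ fun x hx => ?_
  by_contra! hx0
  simp [h x hx0] at hx

lemma betaMeasure_ae_pos (u v : ℝ) : ∀ᵐ x ∂_root_.betaMeasure u v, 0 < x :=
  ae_pos_withDensity_ofReal (_root_.measurable_betaPDFReal u v) fun x hx => by
    simp [_root_.betaPDFReal, hx.not_gt]

lemma genGammaMeasure_ae_pos (u v : ℝ) : ∀ᵐ x ∂genGammaMeasure u v, 0 < x :=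
  ae_pos_withDensity_ofReal (measurable_genGammaPDFReal u v) fun x hx => by
    simp [genGammaPDFReal, hx.not_gt]

lemma betaPDFReal_one_two (x : ℝ) :
    _root_.betaPDFReal 1 2 x = if 0 < x ∧ x < 1 then 2 * (1 - x) else 0 := by
  norm_num [_root_.betaPDFReal, Nat.factorial]

lemma betaPDFReal_three_one (x : ℝ) :
    _root_.betaPDFReal 3 1 x = if 0 < x ∧ x < 1 then 3 * x ^ 2 else 0 := by
  split_ifs <;> norm_num [_root_.betaPDFReal, Nat.factorial, *]

lemma betaMeasure_one_two_Iic_le (t : ℝ) :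
    _root_.betaMeasure 1 2 (Iic t) ≤ ENNReal.ofReal (2 * t) := by
  rw [_root_.betaMeasure, withDensity_apply _ measurableSet_Iic]
  calc ∫⁻ x in Iic t, ENNReal.ofReal (_root_.betaPDFReal 1 2 x)
      ≤ ∫⁻ x in Iic t, (Ioi 0).indicator (fun _ => ENNReal.ofReal 2) x := by
        refine lintegral_mono fun x => ?_
        rw [betaPDFReal_one_two]
        split_ifs with hx
        · rw [indicator_of_mem (mem_Ioi.mpr hx.1)]
          exact ENNReal.ofReal_le_ofReal (by linarith [hx.1])
        · simp
    _ = ENNReal.ofReal (2 * t) := by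
        rw [lintegral_indicator measurableSet_Ioi, setLIntegral_const,
          Measure.restrict_apply measurableSet_Ioi, Ioi_inter_Iic, Real.volume_Ioc,
          ← ENNReal.ofReal_mul (by norm_num), sub_zero]

lemma setLIntegral_rpow_neg_genGammaMeasure {u v r : ℝ} (hu : 0 < u) (hv : 0 < v) (hr : r < u) :
    ∫⁻ z in Ioi 0, ENNReal.ofReal (z ^ (-r)) ∂genGammaMeasure u v
      = ENNReal.ofReal (Real.Gamma ((u - r) / v) / Real.Gamma (u / v)) := by
  have hΓ : 0 < Real.Gamma (u / v) := Real.Gamma_pos_of_pos (div_pos hu hv)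
  have hdensity : ∀ z ∈ Ioi (0 : ℝ),
      ENNReal.ofReal (genGammaPDFReal u v z) * ENNReal.ofReal (z ^ (-r))
        = ENNReal.ofReal (v / Real.Gamma (u / v) * (z ^ (u - r - 1) * Real.exp (-z ^ v))) := by
    intro z (hz : 0 < z)
    rw [genGammaPDFReal, if_pos hz, ← ENNReal.ofReal_mul (by positivity),
      show u - r - 1 = (u - 1) + -r by ring, Real.rpow_add hz]
    ring_nf
  have hint : Integrable (fun z => v / Real.Gamma (u / v) * (z ^ (u - r - 1) * Real.exp (-z ^ v)))
      (volume.restrict (Ioi 0)) :=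
    (integrableOn_rpow_mul_exp_neg_rpow (by linarith) hv).const_mul _
  have hnonneg : 0 ≤ᵐ[volume.restrict (Ioi 0)]
      fun z => v / Real.Gamma (u / v) * (z ^ (u - r - 1) * Real.exp (-z ^ v)) := by
    filter_upwards [ae_restrict_mem measurableSet_Ioi] with z hz
    have : (0 : ℝ) < z := hz
    positivity
  rw [genGammaMeasure, setLIntegral_withDensity_eq_setLIntegral_mul _
      (measurable_genGammaPDFReal u v).ennreal_ofReal (by fun_prop) measurableSet_Ioi]
  simp only [Pi.mul_apply]
  rw [setLIntegral_congr_fun measurableSet_Ioi hdensity,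
    ← ofReal_integral_eq_lintegral_ofReal hint hnonneg, integral_const_mul,
    integral_rpow_mul_exp_neg_rpow hv (by linarith)]
  congr 1
  field_simp
  ring_nf

lemma lintegral_betaMeasure_three_one_indicator_div_le {c δ : ℝ} (hc : 0 ≤ c) (hδ : 0 ≤ δ)
    (z : ℝ) :
    ∫⁻ y, (Ioc 0 δ).indicator (fun w => ENNReal.ofReal (c / w)) (y * z) ∂_root_.betaMeasure 3 1
      ≤ (Ioi 0).indicator (fun z => ENNReal.ofReal (3 * c * δ ^ 2 * z ^ (-3 : ℝ))) z := by
  rcases le_or_gt z 0 with hz | hz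
  · have hvanish : ∀ᵐ y ∂_root_.betaMeasure 3 1,
        (Ioc 0 δ).indicator (fun w => ENNReal.ofReal (c / w)) (y * z) = 0 := by
      filter_upwards [betaMeasure_ae_pos 3 1] with y hy
      exact indicator_of_notMem (fun h => (mul_nonpos_of_nonneg_of_nonpos hy.le hz).not_gt h.1) _
    rw [lintegral_congr_ae hvanish, lintegral_zero]
    exact zero_le
  have hpointwise : ∀ y, ENNReal.ofReal (_root_.betaPDFReal 3 1 y)
        * (Ioc 0 δ).indicator (fun w => ENNReal.ofReal (c / w)) (y * z)
      ≤ (Ioc 0 (δ / z)).indicator (fun _ => ENNReal.ofReal (3 * c * δ / z ^ 2)) y := by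
    intro y
    by_cases hy : 0 < y ∧ y < 1
    · by_cases hyz : y * z ∈ Ioc 0 δ
      · have hyδ : y ≤ δ / z := (le_div_iff₀ hz).mpr hyz.2
        rw [betaPDFReal_three_one, if_pos hy, indicator_of_mem hyz,
          indicator_of_mem (mem_Ioc.mpr ⟨hy.1, hyδ⟩), ← ENNReal.ofReal_mul (by positivity)]
        refine ENNReal.ofReal_le_ofReal ?_
        calc 3 * y ^ 2 * (c / (y * z)) = 3 * c / z * y := by field_simp
          _ ≤ 3 * c / z * (δ / z) := by gcongr
          _ = 3 * c * δ / z ^ 2 := by ring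
      · simp [indicator_of_notMem hyz]
    · simp [betaPDFReal_three_one, hy]
  rw [indicator_of_mem (mem_Ioi.mpr hz), _root_.betaMeasure,
    lintegral_withDensity_eq_lintegral_mul _ (_root_.measurable_betaPDFReal 3 1).ennreal_ofReal
      (by measurability)]
  calc _ ≤ ∫⁻ y, (Ioc 0 (δ / z)).indicator (fun _ => ENNReal.ofReal (3 * c * δ / z ^ 2)) y :=
        lintegral_mono hpointwise
    _ = ENNReal.ofReal (3 * c * δ ^ 2 * z ^ (-3 : ℝ)) := by
        rw [lintegral_indicator_const measurableSet_Ioc, Real.volume_Ioc, sub_zero,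
          ← ENNReal.ofReal_mul (by positivity), Real.rpow_neg hz.le]
        congr 1
        norm_cast
        field_simp

lemma lintegral_prod_indicator_div_le {c δ : ℝ} (hc : 0 ≤ c) (hδ : 0 ≤ δ) :
    ∫⁻ p, (Ioc 0 δ).indicator (fun w => ENNReal.ofReal (c / w)) (p.1 * p.2)
        ∂(_root_.betaMeasure 3 1).prod (genGammaMeasure 5 2)
      ≤ ENNReal.ofReal (3 * c * δ ^ 2 / Real.Gamma (5 / 2)) := by
  have hK : 0 ≤ 3 * c * δ ^ 2 := by positivity
  rw [lintegral_prod_symm _ (by measurability)]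
  calc _ ≤ ∫⁻ z, (Ioi 0).indicator (fun z => ENNReal.ofReal (3 * c * δ ^ 2 * z ^ (-3 : ℝ))) z
          ∂genGammaMeasure 5 2 :=
        lintegral_mono fun z => lintegral_betaMeasure_three_one_indicator_div_le hc hδ z
    _ = ENNReal.ofReal (3 * c * δ ^ 2) * ∫⁻ z in Ioi 0, ENNReal.ofReal (z ^ (-3 : ℝ))
          ∂genGammaMeasure 5 2 := by
        simp_rw [ENNReal.ofReal_mul hK]
        rw [lintegral_indicator measurableSet_Ioi, lintegral_const_mul _ (by measurability)]
    _ = ENNReal.ofReal (3 * c * δ ^ 2 / Real.Gamma (5 / 2)) := by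
        rw [setLIntegral_rpow_neg_genGammaMeasure (by norm_num) (by norm_num) (by norm_num),
          ← ENNReal.ofReal_mul hK]
        norm_num [div_eq_mul_inv]

lemma measure_prod_setOf_mul_le {s δ : ℝ} (hs : 0 ≤ s) (hδ : 0 ≤ δ) :
    (((_root_.betaMeasure 3 1).prod (genGammaMeasure 5 2)).prod (_root_.betaMeasure 1 2))
        {q | q.2 * (q.1.1 * q.1.2) ≤ s ∧ q.1.1 * q.1.2 ∈ Ioc 0 δ}
      ≤ ENNReal.ofReal (6 * s * δ ^ 2 / Real.Gamma (5 / 2)) := by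
  have hslice : ∀ p : ℝ × ℝ, _root_.betaMeasure 1 2
        (Prod.mk p ⁻¹' {q | q.2 * (q.1.1 * q.1.2) ≤ s ∧ q.1.1 * q.1.2 ∈ Ioc 0 δ})
      ≤ (Ioc 0 δ).indicator (fun w => ENNReal.ofReal (2 * s / w)) (p.1 * p.2) := by
    intro p
    by_cases hw : p.1 * p.2 ∈ Ioc 0 δ
    · rw [indicator_of_mem hw, mul_div_assoc]
      refine (measure_mono fun x hx => ?_).trans (betaMeasure_one_two_Iic_le _)
      exact (le_div_iff₀ hw.1).mpr hx.1
    · rw [indicator_of_notMem hw, nonpos_iff_eq_zero]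
      exact measure_mono_null (fun x hx => hw hx.2) measure_empty
  rw [Measure.prod_apply (by measurability)]
  calc _ ≤ ∫⁻ p, (Ioc 0 δ).indicator (fun w => ENNReal.ofReal (2 * s / w)) (p.1 * p.2)
          ∂(_root_.betaMeasure 3 1).prod (genGammaMeasure 5 2) := lintegral_mono hslice
    _ ≤ ENNReal.ofReal (3 * (2 * s) * δ ^ 2 / Real.Gamma (5 / 2)) :=
        lintegral_prod_indicator_div_le (by positivity) hδ
    _ = ENNReal.ofReal (6 * s * δ ^ 2 / Real.Gamma (5 / 2)) := by ring_nf

lemma ProbabilityTheory.iIndepFun.map_prodMk_prodMk_eq_prod {Ω β : Type*} [MeasurableSpace Ω]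
    [MeasurableSpace β] {P : Measure Ω} [IsProbabilityMeasure P] {X Y Z : Ω → β}
    (hX : Measurable X) (hY : Measurable Y) (hZ : Measurable Z) (h : iIndepFun ![X, Y, Z] P) :
    P.map (fun ω => ((Y ω, Z ω), X ω)) = ((P.map Y).prod (P.map Z)).prod (P.map X) := by
  have hmeas : ∀ i, Measurable (![X, Y, Z] i) := fun i => by fin_cases i <;> assumption
  have hYZ : IndepFun Y Z P := by simpa using h.indepFun (i := 1) (j := 2) (by decide)
  have hYZX : IndepFun (fun ω => (Y ω, Z ω)) X P := by
    simpa using h.indepFun_prodMk hmeas 1 2 0 (by decide) (by decide)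
  rw [(indepFun_iff_map_prod_eq_prod_map_map (hY.prodMk hZ).aemeasurable hX.aemeasurable).mp hYZX,
    (indepFun_iff_map_prod_eq_prod_map_map hY.aemeasurable hZ.aemeasurable).mp hYZ]

/-- There is `C > 0` such that for all `a > b ≥ 0` and `ε ∈ (0,1)`,
`P(D₁ ≤ ε^a ∧ D₂ ≤ ε^b) ≤ C * ε^(a+2b)`, where `D₁ = B₁B₂Z₃` and `D₂ = (1-B₁)B₂Z₃`. -/
theorem adam_eve_joint_bound {Ω : Type*} [MeasurableSpace Ω] (P : Measure Ω) [IsProbabilityMeasure P]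
    (B₁ B₂ Z₃ : Ω → ℝ) (hB₁ : Measurable B₁) (hB₂ : Measurable B₂) (hZ₃ : Measurable Z₃)
    (hindep : iIndepFun ![B₁, B₂, Z₃] P)
    (hlaw₁ : P.map B₁ = _root_.betaMeasure 1 2)
    (hlaw₂ : P.map B₂ = _root_.betaMeasure 3 1)
    (hlaw₃ : P.map Z₃ = genGammaMeasure 5 2) :
    ∃ C : ℝ, 0 < C ∧ ∀ a b ε : ℝ, b < a → 0 ≤ b → 0 < ε → ε < 1 →
      P {ω | B₁ ω * B₂ ω * Z₃ ω ≤ ε ^ a ∧ (1 - B₁ ω) * B₂ ω * Z₃ ω ≤ ε ^ b}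
        ≤ ENNReal.ofReal (C * ε ^ (a + 2 * b)) := by
  refine ⟨24 / Real.Gamma (5 / 2), by positivity, fun a b ε hba _ hε hε1 => ?_⟩
  have hεab : ε ^ a ≤ ε ^ b := Real.rpow_le_rpow_of_exponent_ge hε hε1.le hba.le
  set T : Set ((ℝ × ℝ) × ℝ) :=
    {q | q.2 * (q.1.1 * q.1.2) ≤ ε ^ a ∧ q.1.1 * q.1.2 ∈ Ioc 0 (2 * ε ^ b)}
  have hpos : ∀ᵐ ω ∂P, 0 < B₂ ω ∧ 0 < Z₃ ω :=
    (ae_of_ae_map hB₂.aemeasurable (hlaw₂ ▸ betaMeasure_ae_pos 3 1)).and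
      (ae_of_ae_map hZ₃.aemeasurable (hlaw₃ ▸ genGammaMeasure_ae_pos 5 2))
  have hsub : {ω | B₁ ω * B₂ ω * Z₃ ω ≤ ε ^ a ∧ (1 - B₁ ω) * B₂ ω * Z₃ ω ≤ ε ^ b}
      ≤ᵐ[P] (fun ω => ((B₂ ω, Z₃ ω), B₁ ω)) ⁻¹' T := by
    filter_upwards [hpos] with ω ⟨h₂, h₃⟩ ⟨hD₁, hD₂⟩
    exact ⟨by linarith, mul_pos h₂ h₃, by linarith⟩
  calc _ ≤ P ((fun ω => ((B₂ ω, Z₃ ω), B₁ ω)) ⁻¹' T) := measure_mono_ae hsub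
    _ = (((_root_.betaMeasure 3 1).prod (genGammaMeasure 5 2)).prod (_root_.betaMeasure 1 2)) T := by
        rw [← hlaw₁, ← hlaw₂, ← hlaw₃, ← hindep.map_prodMk_prodMk_eq_prod hB₁ hB₂ hZ₃,
          Measure.map_apply ((hB₂.prodMk hZ₃).prodMk hB₁) (by measurability)]
    _ ≤ ENNReal.ofReal (6 * ε ^ a * (2 * ε ^ b) ^ 2 / Real.Gamma (5 / 2)) :=
        measure_prod_setOf_mul_le (by positivity) (by positivity)
    _ = ENNReal.ofReal (24 / Real.Gamma (5 / 2) * ε ^ (a + 2 * b)) := by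
        rw [two_mul b, Real.rpow_add hε, Real.rpow_add hε]
        ring_nf
end

section
/- There exists a constant C > 0 such that for all real numbers a > b ≥ 0 and all ε ∈ (0,1): P(B₂Z₃ ≤ 2ε^b and B₁B₂Z₃ ≤ ε^a) ≤ C · ε^a · min(1, ε^{2b}). -/
open MeasureTheory ProbabilityTheory Real Filter

/-!
On a dyadic shell `M / 2 ^ (k + 1) < Z ≤ M / 2 ^ k` the constraint `X * Z ≤ δ` forces
`X ≤ 2 * δ * 2 ^ k / M`, so for independent `X` and `Z` with `P (X ≤ t) ≲ t ^ p` and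
`P (Z ≤ t) ≲ t ^ q`, `q > p`, the shells contribute a geometric series and
`P (Z ≤ M, X * Z ≤ δ) ≲ δ ^ p * M ^ (q - p)`. The same estimate with `M = 1` shows that
`B₂ * Z₃` has small-ball exponent `3`, and applying it to `X = B₁`, `Z = B₂ * Z₃`,
`p = 1`, `q = 3`, `δ = ε ^ a`, `M = 2 * ε ^ b` gives the bound `ε ^ a * ε ^ (2 * b)`.
-/

def SmallBallBound {Ω : Type*} [MeasurableSpace Ω] (P : Measure Ω) (X : Ω → ℝ) (K : ℝ) (p : ℕ) :
    Prop :=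
  ∀ t, 0 ≤ t → P {ω | X ω ≤ t} ≤ ENNReal.ofReal (K * t ^ p)

lemma withDensity_Iic_le_of_le_pow {f : ℝ → ℝ} {K : ℝ} {n : ℕ} (hK : 0 ≤ K)
    (hf_nonpos : ∀ x ≤ 0, f x ≤ 0) (hf_pow : ∀ x, 0 < x → f x ≤ K * x ^ n) {t : ℝ} (ht : 0 ≤ t) :
    volume.withDensity (fun x => ENNReal.ofReal (f x)) (Set.Iic t)
      ≤ ENNReal.ofReal (K * t ^ (n + 1)) := by
  set g : ℝ → ENNReal := (Set.Ioc 0 t).indicator fun _ => ENNReal.ofReal (K * t ^ n)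
  have hfg : ∀ x ∈ Set.Iic t, ENNReal.ofReal (f x) ≤ g x := by
    intro x hxt
    rcases le_or_gt x 0 with hx | hx
    · simp [ENNReal.ofReal_eq_zero.2 (hf_nonpos x hx)]
    · simp only [g, Set.indicator_of_mem (Set.mem_Ioc.2 ⟨hx, hxt⟩)]
      exact ENNReal.ofReal_le_ofReal ((hf_pow x hx).trans (by gcongr; exact hxt))
  rw [withDensity_apply _ measurableSet_Iic]
  calc ∫⁻ x in Set.Iic t, ENNReal.ofReal (f x)
      ≤ ∫⁻ x in Set.Iic t, g x := setLIntegral_mono (measurable_const.indicator measurableSet_Ioc) hfg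
    _ ≤ ∫⁻ x, g x := setLIntegral_le_lintegral _ _
    _ = ENNReal.ofReal (K * t ^ n) * ENNReal.ofReal t := by
      rw [lintegral_indicator_const measurableSet_Ioc, Real.volume_Ioc, sub_zero]
    _ = ENNReal.ofReal (K * t ^ (n + 1)) := by
      rw [← ENNReal.ofReal_mul (by positivity), pow_succ, mul_assoc]

lemma betaPDFReal_of_nonpos (u v : ℝ) {x : ℝ} (hx : x ≤ 0) : _root_.betaPDFReal u v x = 0 :=
  if_neg fun h => hx.not_gt h.1

lemma genGammaPDFReal_of_nonpos (u v : ℝ) {x : ℝ} (hx : x ≤ 0) : genGammaPDFReal u v x = 0 :=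
  if_neg hx.not_gt

lemma betaPDFReal_one_two_le (x : ℝ) : _root_.betaPDFReal 1 2 x ≤ 2 := by
  unfold _root_.betaPDFReal
  split_ifs with hx
  · norm_num [Nat.factorial]
    linarith [hx.1]
  · norm_num

lemma betaPDFReal_three_one_le (x : ℝ) : _root_.betaPDFReal 3 1 x ≤ 3 * x ^ 2 := by
  unfold _root_.betaPDFReal
  split_ifs
  · norm_num [Nat.factorial]
  · positivity

lemma genGammaPDFReal_five_two_le {x : ℝ} (hx : 0 < x) :
    genGammaPDFReal 5 2 x ≤ 2 / Real.Gamma (5 / 2) * x ^ 4 := by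
  rw [genGammaPDFReal, if_pos hx, show (5 : ℝ) - 1 = (4 : ℕ) by norm_num, Real.rpow_natCast]
  exact mul_le_of_le_one_right (by positivity)
    (Real.exp_le_one_iff.2 (neg_nonpos.2 (by positivity)))

lemma setOf_le_and_mul_le_subset_dyadic {Ω : Type*} (X Z : Ω → ℝ) {M δ : ℝ} (hM : 0 < M)
    (hδ : 0 ≤ δ) :
    {ω | Z ω ≤ M ∧ X ω * Z ω ≤ δ}
      ⊆ {ω | Z ω ≤ 0} ∪ ⋃ k : ℕ, {ω | Z ω ≤ M / 2 ^ k ∧ X ω ≤ 2 * δ * 2 ^ k / M} := by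
  rintro ω ⟨hZM, hXZ⟩
  rcases le_or_gt (Z ω) 0 with hZ | hZ
  · exact Or.inl hZ
  obtain ⟨k, hk, hk'⟩ := exists_nat_pow_near ((one_le_div hZ).2 hZM) one_lt_two
  refine Or.inr (Set.mem_iUnion.2 ⟨k, ?_, ?_⟩)
  · rwa [le_div_iff₀ (by positivity), mul_comm, ← le_div_iff₀ hZ]
  · have hMk : M ≤ 2 * 2 ^ k * Z ω := by
      rw [div_lt_iff₀ hZ, pow_succ] at hk'
      linarith
    calc X ω ≤ δ / Z ω := (le_div_iff₀ hZ).2 hXZ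
      _ ≤ 2 * δ * 2 ^ k / M := by
        rw [div_le_div_iff₀ hZ hM]
        nlinarith [mul_le_mul_of_nonneg_left hMk hδ]

section SmallBallBound

variable {Ω : Type*} [MeasurableSpace Ω] {P : Measure Ω} {X Z : Ω → ℝ} {K L : ℝ} {p q : ℕ}

lemma SmallBallBound.of_map_eq_withDensity (hX : Measurable X) {f : ℝ → ℝ}
    (hlaw : P.map X = volume.withDensity fun x => ENNReal.ofReal (f x)) {n : ℕ}
    (hK : 0 ≤ K) (hf_nonpos : ∀ x ≤ 0, f x ≤ 0) (hf_pow : ∀ x, 0 < x → f x ≤ K * x ^ n) :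
    SmallBallBound P X K (n + 1) := by
  intro t ht
  rw [show {ω | X ω ≤ t} = X ⁻¹' Set.Iic t from rfl, ← Measure.map_apply hX measurableSet_Iic,
    hlaw]
  exact withDensity_Iic_le_of_le_pow hK hf_nonpos hf_pow ht

lemma smallBallBound_of_map_eq_betaMeasure_one_two (hX : Measurable X)
    (hlaw : P.map X = _root_.betaMeasure 1 2) : SmallBallBound P X 2 1 :=
  .of_map_eq_withDensity hX hlaw zero_le_two (fun _ hx => (betaPDFReal_of_nonpos 1 2 hx).le)
    fun x _ => by simpa using betaPDFReal_one_two_le x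

lemma smallBallBound_of_map_eq_betaMeasure_three_one (hX : Measurable X)
    (hlaw : P.map X = _root_.betaMeasure 3 1) : SmallBallBound P X 3 3 :=
  .of_map_eq_withDensity hX hlaw (by norm_num) (fun _ hx => (betaPDFReal_of_nonpos 3 1 hx).le)
    fun x _ => betaPDFReal_three_one_le x

lemma smallBallBound_of_map_eq_genGammaMeasure_five_two (hX : Measurable X)
    (hlaw : P.map X = genGammaMeasure 5 2) :
    SmallBallBound P X (2 / Real.Gamma (5 / 2)) 5 :=
  .of_map_eq_withDensity hX hlaw (by positivity)
    (fun _ hx => (genGammaPDFReal_of_nonpos 5 2 hx).le) fun _ hx => genGammaPDFReal_five_two_le hx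

lemma SmallBallBound.measure_dyadic_shell_le (hind : IndepFun X Z P) (hK : 0 ≤ K) (hL : 0 ≤ L)
    (hpq : p < q) (hX : SmallBallBound P X K p) (hZ : SmallBallBound P Z L q) {M δ : ℝ}
    (hM : 0 < M) (hδ : 0 ≤ δ) (k : ℕ) :
    P {ω | Z ω ≤ M / 2 ^ k ∧ X ω ≤ 2 * δ * 2 ^ k / M}
      ≤ ENNReal.ofReal (2 ^ p * K * L * δ ^ p * M ^ (q - p) * (1 / 2) ^ k) := by
  obtain ⟨d, rfl⟩ := Nat.exists_eq_add_of_lt hpq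
  have hscale : (M / 2 ^ k) ^ (p + d + 1) * (2 * δ * 2 ^ k / M) ^ p
      = 2 ^ p * δ ^ p * M ^ (d + 1) * ((1 / 2) ^ k) ^ (d + 1) := by
    have hcancel : M / 2 ^ k * (2 * δ * 2 ^ k / M) = 2 * δ := by field_simp
    rw [show p + d + 1 = p + (d + 1) by ring, pow_add, mul_right_comm, ← mul_pow, hcancel,
      div_eq_mul_one_div M, one_div_pow]
    ring
  have hdecay : ((1 / 2 : ℝ) ^ k) ^ (d + 1) ≤ (1 / 2) ^ k :=
    pow_le_of_le_one (by positivity) (pow_le_one₀ (by norm_num) (by norm_num)) d.succ_ne_zero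
  calc P {ω | Z ω ≤ M / 2 ^ k ∧ X ω ≤ 2 * δ * 2 ^ k / M}
      = P {ω | Z ω ≤ M / 2 ^ k} * P {ω | X ω ≤ 2 * δ * 2 ^ k / M} :=
        hind.symm.measure_inter_preimage_eq_mul _ _ measurableSet_Iic measurableSet_Iic
    _ ≤ ENNReal.ofReal (L * (M / 2 ^ k) ^ (p + d + 1))
          * ENNReal.ofReal (K * (2 * δ * 2 ^ k / M) ^ p) :=
        mul_le_mul' (hZ _ (by positivity)) (hX _ (by positivity))
    _ = ENNReal.ofReal (K * L * (2 ^ p * δ ^ p * M ^ (d + 1) * ((1 / 2) ^ k) ^ (d + 1))) := by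
        rw [← ENNReal.ofReal_mul (by positivity), ← hscale]
        ring_nf
    _ ≤ ENNReal.ofReal (2 ^ p * K * L * δ ^ p * M ^ (p + d + 1 - p) * (1 / 2) ^ k) := by
        rw [show p + d + 1 - p = d + 1 by omega]
        refine ENNReal.ofReal_le_ofReal ?_
        calc K * L * (2 ^ p * δ ^ p * M ^ (d + 1) * ((1 / 2) ^ k) ^ (d + 1))
            = 2 ^ p * K * L * δ ^ p * M ^ (d + 1) * ((1 / 2) ^ k) ^ (d + 1) := by ring
          _ ≤ 2 ^ p * K * L * δ ^ p * M ^ (d + 1) * (1 / 2) ^ k := by gcongr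

lemma SmallBallBound.measure_le_and_mul_le (hind : IndepFun X Z P) (hK : 0 ≤ K) (hL : 0 ≤ L)
    (hpq : p < q) (hX : SmallBallBound P X K p) (hZ : SmallBallBound P Z L q) {M δ : ℝ}
    (hM : 0 < M) (hδ : 0 ≤ δ) :
    P {ω | Z ω ≤ M ∧ X ω * Z ω ≤ δ}
      ≤ ENNReal.ofReal (2 ^ (p + 1) * K * L * δ ^ p * M ^ (q - p)) := by
  set c := 2 ^ p * K * L * δ ^ p * M ^ (q - p)
  have hnull : P {ω | Z ω ≤ 0} = 0 :=
    le_antisymm ((hZ 0 le_rfl).trans (by simp [(Nat.zero_le p).trans_lt hpq |>.ne'])) bot_le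
  calc P {ω | Z ω ≤ M ∧ X ω * Z ω ≤ δ}
      ≤ P {ω | Z ω ≤ 0}
          + ∑' k : ℕ, P {ω | Z ω ≤ M / 2 ^ k ∧ X ω ≤ 2 * δ * 2 ^ k / M} :=
        (measure_mono (setOf_le_and_mul_le_subset_dyadic X Z hM hδ)).trans
          ((measure_union_le _ _).trans (add_le_add le_rfl (measure_iUnion_le _)))
    _ ≤ ∑' k : ℕ, ENNReal.ofReal (c * (1 / 2) ^ k) := by
        rw [hnull, zero_add]
        exact ENNReal.tsum_le_tsum (hX.measure_dyadic_shell_le hind hK hL hpq hZ hM hδ)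
    _ = ENNReal.ofReal (2 ^ (p + 1) * K * L * δ ^ p * M ^ (q - p)) := by
        rw [← ENNReal.ofReal_tsum_of_nonneg (fun k => by positivity)
          (summable_geometric_two.mul_left c), tsum_mul_left, tsum_geometric_two]
        congr 1
        ring

lemma SmallBallBound.mul (hind : IndepFun X Z P) (hK : 0 ≤ K) (hL : 0 ≤ L) (hpq : p < q)
    (hX : SmallBallBound P X K p) (hZ : SmallBallBound P Z L q) :
    SmallBallBound P (X * Z) (K + 2 ^ (p + 1) * K * L) p := by
  intro y hy
  have hsub : {ω | (X * Z) ω ≤ y} ⊆ {ω | Z ω ≤ 1 ∧ X ω * Z ω ≤ y} ∪ {ω | X ω ≤ y} := by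
    intro ω hω
    by_cases hZ1 : Z ω ≤ 1
    · exact Or.inl ⟨hZ1, hω⟩
    · refine Or.inr (show X ω ≤ y from le_of_not_gt fun hXy => ?_)
      have : X ω * Z ω ≤ y := hω
      nlinarith
  calc P {ω | (X * Z) ω ≤ y}
      ≤ P {ω | Z ω ≤ 1 ∧ X ω * Z ω ≤ y} + P {ω | X ω ≤ y} :=
        (measure_mono hsub).trans (measure_union_le _ _)
    _ ≤ ENNReal.ofReal (2 ^ (p + 1) * K * L * y ^ p * 1 ^ (q - p))
          + ENNReal.ofReal (K * y ^ p) :=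
        add_le_add (hX.measure_le_and_mul_le hind hK hL hpq hZ one_pos hy) (hX y hy)
    _ = ENNReal.ofReal ((K + 2 ^ (p + 1) * K * L) * y ^ p) := by
        rw [← ENNReal.ofReal_add (by positivity) (by positivity)]
        ring_nf

end SmallBallBound

theorem intermediate_bound_general {Ω : Type*} [MeasurableSpace Ω] (P : Measure Ω)
    (B₁ B₂ Z₃ : Ω → ℝ) (hB₁ : Measurable B₁) (hB₂ : Measurable B₂) (hZ₃ : Measurable Z₃)
    (hindep : iIndepFun ![B₁, B₂, Z₃] P)
    (hlaw₁ : P.map B₁ = _root_.betaMeasure 1 2)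
    (hlaw₂ : P.map B₂ = _root_.betaMeasure 3 1)
    (hlaw₃ : P.map Z₃ = genGammaMeasure 5 2) :
    ∃ C : ℝ, 0 < C ∧ ∀ a b ε : ℝ, b < a → 0 ≤ b → 0 < ε → ε < 1 →
      P {ω | B₂ ω * Z₃ ω ≤ 2 * ε ^ b ∧ B₁ ω * B₂ ω * Z₃ ω ≤ ε ^ a}
        ≤ ENNReal.ofReal (C * ε ^ a * min 1 (ε ^ (2 * b))) := by
  have hmeas : ∀ i, Measurable (![B₁, B₂, Z₃] i) := fun i => by fin_cases i <;> assumption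
  have hind₂₃ : IndepFun B₂ Z₃ P := hindep.indepFun (show (1 : Fin 3) ≠ 2 by decide)
  have hind₁ : IndepFun B₁ (B₂ * Z₃) P :=
    (hindep.indepFun_mul_left hmeas 1 2 0 (by decide) (by decide)).symm
  have hY := (smallBallBound_of_map_eq_betaMeasure_three_one hB₂ hlaw₂).mul hind₂₃ (by norm_num)
    (by positivity) (by norm_num) (smallBallBound_of_map_eq_genGammaMeasure_five_two hZ₃ hlaw₃)
  set L : ℝ := 3 + 2 ^ (3 + 1) * 3 * (2 / Real.Gamma (5 / 2))
  refine ⟨32 * L, by positivity, fun a b ε _ hb hε hε1 => ?_⟩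
  have hbound := (smallBallBound_of_map_eq_betaMeasure_one_two hB₁ hlaw₁).measure_le_and_mul_le
    hind₁ zero_le_two (by positivity) (by norm_num) hY (M := 2 * ε ^ b) (δ := ε ^ a)
    (by positivity) (by positivity)
  rw [min_eq_right (Real.rpow_le_one hε.le hε1.le (by positivity)), mul_comm 2 b,
    Real.rpow_mul hε.le, Real.rpow_two]
  convert hbound using 2
  · ext ω
    simp [mul_assoc]
  · ring

/-- There is `C > 0` such that for all `a > b ≥ 0` and `ε ∈ (0,1)`,
`P(B₂Z₃ ≤ 2ε^b ∧ B₁B₂Z₃ ≤ ε^a) ≤ C * ε^a * min 1 (ε^(2b))`. -/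
theorem intermediate_bound {Ω : Type*} [MeasurableSpace Ω] (P : Measure Ω) [IsProbabilityMeasure P]
    (B₁ B₂ Z₃ : Ω → ℝ) (hB₁ : Measurable B₁) (hB₂ : Measurable B₂) (hZ₃ : Measurable Z₃)
    (hindep : iIndepFun ![B₁, B₂, Z₃] P)
    (hlaw₁ : P.map B₁ = _root_.betaMeasure 1 2)
    (hlaw₂ : P.map B₂ = _root_.betaMeasure 3 1)
    (hlaw₃ : P.map Z₃ = genGammaMeasure 5 2) :
    ∃ C : ℝ, 0 < C ∧ ∀ a b ε : ℝ, b < a → 0 ≤ b → 0 < ε → ε < 1 →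
      P {ω | B₂ ω * Z₃ ω ≤ 2 * ε ^ b ∧ B₁ ω * B₂ ω * Z₃ ω ≤ ε ^ a}
        ≤ ENNReal.ofReal (C * ε ^ a * min 1 (ε ^ (2 * b))) :=
  intermediate_bound_general P B₁ B₂ Z₃ hB₁ hB₂ hZ₃ hindep hlaw₁ hlaw₂ hlaw₃
end

section
/- For every η ∈ (0,1) there exists ε₀ > 0 such that for all ε ∈ (0, ε₀): P(D₁·D₂² ≤ ε and D₁²·D₂ ≤ ε) ≤ ε^{1−η}. -/
open MeasureTheory ProbabilityTheory Real Filter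

/-!
On the event, `D₁D₂² + D₁²D₂ = D₁D₂(D₁ + D₂) = B₁(1 - B₁)B₂³Z₃³ ≤ 2ε`. Fix `1 - η < p < 1`.
By Markov's inequality for the `(-p)`-th power and independence,
`P(event) ≤ (2ε)^p E[(B₁(1 - B₁))^(-p)] E[B₂^(-3p)] E[Z₃^(-3p)]`, and these negative moments are
finite because near `0` the three densities are `O(1)`, `O(x²)` and `O(x⁴)` while `p < 1`
(the factor `(1 - B₁)^(-p)` is absorbed by the density `2(1 - x)` of `B₁`).
Since `p > 1 - η`, the bound `C ε^p` is at most `ε^(1 - η)` for small `ε`.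
-/

open Set Topology
open scoped ENNReal

theorem eventually_mul_rpow_le_rpow (K : ℝ) {a b : ℝ} (hab : b < a) :
    ∀ᶠ ε in 𝓝[>] (0 : ℝ), K * ε ^ a ≤ ε ^ b := by
  have hlim : Tendsto (fun ε : ℝ => K * ε ^ (a - b)) (𝓝[>] 0) (𝓝 0) := by
    have : Tendsto (fun ε : ℝ => K * ε ^ (a - b)) (𝓝[>] 0) (𝓝 (K * 0 ^ (a - b))) :=
      ((Real.continuousAt_rpow_const 0 (a - b) (Or.inr (by linarith))).tendsto.const_mul
        K).mono_left nhdsWithin_le_nhds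
    rwa [Real.zero_rpow (by linarith), mul_zero] at this
  filter_upwards [hlim.eventually_lt_const zero_lt_one, self_mem_nhdsWithin] with ε hε (hε0 : 0 < ε)
  calc K * ε ^ a = K * ε ^ (a - b) * ε ^ b := by
        rw [mul_assoc, ← Real.rpow_add hε0, sub_add_cancel]
    _ ≤ 1 * ε ^ b := by gcongr
    _ = ε ^ b := one_mul _

section Probability

variable {Ω : Type*} [MeasurableSpace Ω] {P : Measure Ω}

theorem mul_measure_le_prod_lintegral_of_iIndepFun {ι : Type*} [Fintype ι] {β : ι → Type*}
    [∀ i, MeasurableSpace (β i)] {X : ∀ i, Ω → β i} (hX : iIndepFun X P)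
    (hXm : ∀ i, Measurable (X i)) {g : ∀ i, β i → ℝ≥0∞} (hg : ∀ i, Measurable (g i)) {S : Set Ω} {c : ℝ≥0∞}
    (hS : ∀ ω ∈ S, c ≤ ∏ i, g i (X i ω)) :
    c * P S ≤ ∏ i, ∫⁻ ω, g i (X i ω) ∂P :=
  calc c * P S ≤ c * P {ω | c ≤ ∏ i, g i (X i ω)} := by gcongr; exact hS
    _ ≤ ∫⁻ ω, ∏ i, g i (X i ω) ∂P :=
        mul_meas_ge_le_lintegral₀ (Finset.measurable_prod _ fun i _ =>
          (hg i).comp (hXm i)).aemeasurable c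
    _ = ∏ i, ∫⁻ ω, g i (X i ω) ∂P :=
        lintegral_prod_eq_prod_lintegral_of_indepFun _ (fun i ω => g i (X i ω)) (hX.comp g hg)
          fun i => (hg i).comp (hXm i)

theorem ae_mem_of_map_eq_withDensity {X : Ω → ℝ} (hX : AEMeasurable X P) {f : ℝ → ℝ}
    {s : Set ℝ} (hs : MeasurableSet s)
    (hlaw : P.map X = volume.withDensity fun x => ENNReal.ofReal (f x)) (hf : ∀ x ∉ s, f x = 0) :
    ∀ᵐ ω ∂P, X ω ∈ s := by
  refine ae_of_ae_map hX ?_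
  rw [hlaw, ae_iff]
  change (volume.withDensity _) sᶜ = 0
  rw [withDensity_apply _ hs.compl,
    setLIntegral_congr_fun hs.compl (g := 0) fun x hx => by simp [hf x hx]]
  exact lintegral_zero

section NegativeMoments

variable [IsFiniteMeasure P] {X : Ω → ℝ}

theorem lintegral_ofReal_comp_lt_top_of_map_eq_withDensity (hX : Measurable X)
    {f h : ℝ → ℝ} (hf : Measurable f) (hh : Measurable h)
    (hlaw : P.map X = volume.withDensity fun x => ENNReal.ofReal (f x)) {C r : ℝ} (hr : -1 < r)
    (hneg : ∀ x ≤ 0, f x = 0) (hunit : ∀ x ∈ Ioo 0 1, f x * h x ≤ C * x ^ r)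
    (hbig : ∀ x, 1 ≤ x → f x * h x ≤ f x) :
    ∫⁻ ω, ENNReal.ofReal (h (X ω)) ∂P < ⊤ := by
  have hpt : ∀ x, ENNReal.ofReal (f x) * ENNReal.ofReal (h x) ≤
      (Ioo 0 1).indicator (fun x => ENNReal.ofReal (C * x ^ r)) x + ENNReal.ofReal (f x) := by
    intro x
    rcases le_or_gt (f x) 0 with hfx | hfx
    · simp [ENNReal.ofReal_of_nonpos hfx]
    rw [← ENNReal.ofReal_mul hfx.le]
    rcases le_or_gt x 0 with hx0 | hx0
    · exact absurd (hneg x hx0) hfx.ne'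
    rcases lt_or_ge x 1 with hx1 | hx1
    · rw [indicator_of_mem (show x ∈ Ioo 0 1 from ⟨hx0, hx1⟩)]
      exact le_add_right (ENNReal.ofReal_le_ofReal (hunit x ⟨hx0, hx1⟩))
    · exact le_add_left (ENNReal.ofReal_le_ofReal (hbig x hx1))
  have hpow : ∫⁻ x in Ioo 0 1, ENNReal.ofReal (C * x ^ r) < ⊤ :=
    (((intervalIntegral.integrableOn_Ioo_rpow_iff zero_lt_one).mpr hr).const_mul
      C).lintegral_lt_top
  have hmass : ∫⁻ x, ENNReal.ofReal (f x) < ⊤ := by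
    have := measure_lt_top (P.map X) univ
    rwa [hlaw, withDensity_apply _ MeasurableSet.univ, Measure.restrict_univ] at this
  calc ∫⁻ ω, ENNReal.ofReal (h (X ω)) ∂P
      = ∫⁻ x, ENNReal.ofReal (h x) ∂(volume.withDensity fun x => ENNReal.ofReal (f x)) := by
        rw [← hlaw, lintegral_map hh.ennreal_ofReal hX]
    _ ≤ ∫⁻ x, ENNReal.ofReal (f x) * ENNReal.ofReal (h x) :=
        lintegral_withDensity_le_lintegral_mul _ hf.ennreal_ofReal _
    _ ≤ ∫⁻ x, ((Ioo 0 1).indicator (fun x => ENNReal.ofReal (C * x ^ r)) x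
          + ENNReal.ofReal (f x)) := lintegral_mono hpt
    _ = (∫⁻ x in Ioo 0 1, ENNReal.ofReal (C * x ^ r)) + ∫⁻ x, ENNReal.ofReal (f x) := by
        rw [lintegral_add_right _ hf.ennreal_ofReal, lintegral_indicator measurableSet_Ioo]
    _ < ⊤ := ENNReal.add_lt_top.mpr ⟨hpow, hmass⟩

theorem lintegral_rpow_neg_mul_one_sub_rpow_neg_lt_top_of_map_eq_betaMeasure
    (hX : Measurable X) {u v q q' : ℝ} (hlaw : P.map X = _root_.betaMeasure u v)
    (hq : q < u) (hq' : q' ≤ v - 1) :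
    ∫⁻ ω, ENNReal.ofReal (X ω ^ (-q) * (1 - X ω) ^ (-q')) ∂P < ⊤ := by
  set K := Real.Gamma (u + v) / (Real.Gamma u * Real.Gamma v)
  refine lintegral_ofReal_comp_lt_top_of_map_eq_withDensity hX (f := _root_.betaPDFReal u v)
    (h := fun x => x ^ (-q) * (1 - x) ^ (-q'))
    (Measurable.ite (measurableSet_Ioi.inter measurableSet_Iio) (by fun_prop) measurable_const)
    (by fun_prop) hlaw (C := |K|) (r := u - 1 - q) (by linarith) ?_ ?_ ?_
  · intro x hx
    simp [_root_.betaPDFReal, hx.not_gt]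
  · intro x ⟨hx0, hx1⟩
    have hx1' : 0 < 1 - x := by linarith
    have hsplit : _root_.betaPDFReal u v x * (x ^ (-q) * (1 - x) ^ (-q'))
        = K * x ^ (u - 1 - q) * (1 - x) ^ (v - 1 - q') := by
      rw [_root_.betaPDFReal, if_pos ⟨hx0, hx1⟩, sub_eq_add_neg (u - 1), sub_eq_add_neg (v - 1),
        Real.rpow_add hx0, Real.rpow_add hx1']
      ring
    have hone : (1 - x) ^ (v - 1 - q') ≤ 1 := Real.rpow_le_one hx1'.le (by linarith) (by linarith)
    rw [hsplit, mul_assoc]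
    calc K * (x ^ (u - 1 - q) * (1 - x) ^ (v - 1 - q')) ≤ |K| * (x ^ (u - 1 - q) * 1) := by
          gcongr
          exact le_abs_self K
      _ = |K| * x ^ (u - 1 - q) := by rw [mul_one]
  · intro x hx
    simp [_root_.betaPDFReal, not_lt.mpr hx]

theorem lintegral_rpow_neg_lt_top_of_map_eq_genGammaMeasure
    (hX : Measurable X) {u v q : ℝ} (hlaw : P.map X = genGammaMeasure u v) (hv : 0 < v)
    (hq : 0 ≤ q) (hqu : q < u) :
    ∫⁻ ω, ENNReal.ofReal (X ω ^ (-q)) ∂P < ⊤ := by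
  set K := v / Real.Gamma (u / v)
  have hK : 0 ≤ K := div_nonneg hv.le (Real.Gamma_pos_of_pos (div_pos (by linarith) hv)).le
  refine lintegral_ofReal_comp_lt_top_of_map_eq_withDensity hX (f := genGammaPDFReal u v)
    (h := fun x => x ^ (-q)) (Measurable.ite measurableSet_Ioi (by fun_prop) measurable_const)
    (by fun_prop) hlaw (C := K) (r := u - 1 - q) (by linarith) ?_ ?_ ?_
  · intro x hx
    simp [genGammaPDFReal, hx.not_gt]
  · intro x ⟨hx0, hx1⟩
    have hexp : Real.exp (-(x ^ v)) ≤ 1 :=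
      Real.exp_le_one_iff.mpr (neg_nonpos.mpr (Real.rpow_nonneg hx0.le v))
    calc genGammaPDFReal u v x * x ^ (-q) = K * (x ^ (u - 1) * x ^ (-q)) * Real.exp (-(x ^ v)) := by
          rw [genGammaPDFReal, if_pos hx0]; ring
      _ ≤ K * (x ^ (u - 1) * x ^ (-q)) * 1 := by gcongr
      _ = K * x ^ (u - 1 - q) := by rw [mul_one, ← Real.rpow_add hx0, sub_eq_add_neg (u - 1)]
  · intro x hx
    have hf : 0 ≤ genGammaPDFReal u v x := by
      rw [genGammaPDFReal, if_pos (by linarith)]; positivity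
    exact mul_le_of_le_one_right hf (Real.rpow_le_one_of_one_le_of_nonpos hx (by linarith))

end NegativeMoments

end Probability

theorem rpow_neg_two_mul_le_of_degrees_le {b y z ε p : ℝ} (hb : b ∈ Ioo 0 1) (hy : 0 < y)
    (hz : 0 < z) (hp : 0 ≤ p) (h₁ : (b * y * z) * ((1 - b) * y * z) ^ 2 ≤ ε)
    (h₂ : (b * y * z) ^ 2 * ((1 - b) * y * z) ≤ ε) :
    (2 * ε) ^ (-p) ≤ b ^ (-p) * (1 - b) ^ (-p) * y ^ (-(3 * p)) * z ^ (-(3 * p)) := by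
  obtain ⟨hb0, hb1⟩ := hb
  have hb1' : 0 < 1 - b := by linarith
  have hsum : b * (1 - b) * y ^ 3 * z ^ 3 ≤ 2 * ε := by
    have : (b * y * z) * ((1 - b) * y * z) ^ 2 + (b * y * z) ^ 2 * ((1 - b) * y * z)
        = b * (1 - b) * y ^ 3 * z ^ 3 := by ring
    linarith
  calc (2 * ε) ^ (-p) ≤ (b * (1 - b) * y ^ 3 * z ^ 3) ^ (-p) :=
        Real.rpow_le_rpow_of_nonpos (by positivity) hsum (by linarith)
    _ = b ^ (-p) * (1 - b) ^ (-p) * y ^ (-(3 * p)) * z ^ (-(3 * p)) := by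
        rw [Real.mul_rpow (by positivity) (by positivity), Real.mul_rpow (by positivity)
          (by positivity), Real.mul_rpow hb0.le hb1'.le, ← Real.rpow_natCast y 3,
          ← Real.rpow_natCast z 3, ← Real.rpow_mul hy.le, ← Real.rpow_mul hz.le]
        norm_num

/-- `∏ i, negMomentWeight p i (![b, y, z] i) = (b (1 - b) y³ z³) ^ (-p)` for `b ∈ (0, 1)`,
`y, z > 0`. -/
noncomputable def negMomentWeight (p : ℝ) : Fin 3 → ℝ → ℝ≥0∞ :=
  ![fun x => ENNReal.ofReal (x ^ (-p) * (1 - x) ^ (-p)), fun x => ENNReal.ofReal (x ^ (-(3 * p))),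
    fun x => ENNReal.ofReal (x ^ (-(3 * p)))]

theorem measurable_negMomentWeight (p : ℝ) (i : Fin 3) : Measurable (negMomentWeight p i) := by
  fin_cases i <;>
    simp only [negMomentWeight, Fin.zero_eta, Fin.mk_one, Fin.reduceFinMk, Fin.isValue,
      Matrix.cons_val_zero, Matrix.cons_val_one, Matrix.cons_val] <;> fun_prop

theorem ofReal_rpow_neg_two_mul_le_prod_negMomentWeight {b y z ε p : ℝ} (hb : b ∈ Ioo 0 1)
    (hy : 0 < y) (hz : 0 < z) (hp : 0 ≤ p) (h₁ : (b * y * z) * ((1 - b) * y * z) ^ 2 ≤ ε)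
    (h₂ : (b * y * z) ^ 2 * ((1 - b) * y * z) ≤ ε) :
    ENNReal.ofReal ((2 * ε) ^ (-p)) ≤ ∏ i, negMomentWeight p i (![b, y, z] i) := by
  simp only [negMomentWeight, Fin.prod_univ_three, Matrix.cons_val_zero, Matrix.cons_val_one,
    Matrix.cons_val_two, Matrix.head_cons, Matrix.tail_cons]
  rw [← ENNReal.ofReal_mul' (by positivity), ← ENNReal.ofReal_mul' (by positivity)]
  exact ENNReal.ofReal_le_ofReal (rpow_neg_two_mul_le_of_degrees_le hb hy hz hp h₁ h₂)

section Degrees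

variable {Ω : Type*} [MeasurableSpace Ω] {P : Measure Ω} {B₁ B₂ Z₃ : Ω → ℝ}

theorem prod_lintegral_negMomentWeight_ne_top [IsFiniteMeasure P] (hB₁ : Measurable B₁)
    (hB₂ : Measurable B₂) (hZ₃ : Measurable Z₃) (hlaw₁ : P.map B₁ = _root_.betaMeasure 1 2)
    (hlaw₂ : P.map B₂ = _root_.betaMeasure 3 1) (hlaw₃ : P.map Z₃ = genGammaMeasure 5 2)
    {p : ℝ} (hp : 0 ≤ p) (hp1 : p < 1) :
    ∏ i, ∫⁻ ω, negMomentWeight p i (![B₁, B₂, Z₃] i ω) ∂P ≠ ⊤ := by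
  simp only [negMomentWeight, Fin.prod_univ_three, Matrix.cons_val_zero, Matrix.cons_val_one,
    Matrix.cons_val_two, Matrix.head_cons, Matrix.tail_cons]
  refine ENNReal.mul_ne_top (ENNReal.mul_ne_top ?_ ?_) ?_ <;> apply LT.lt.ne
  · exact lintegral_rpow_neg_mul_one_sub_rpow_neg_lt_top_of_map_eq_betaMeasure hB₁ hlaw₁
      (by linarith) (by linarith)
  · simpa using lintegral_rpow_neg_mul_one_sub_rpow_neg_lt_top_of_map_eq_betaMeasure hB₂ hlaw₂
      (q := 3 * p) (q' := 0) (by linarith) (by norm_num)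
  · exact lintegral_rpow_neg_lt_top_of_map_eq_genGammaMeasure hZ₃ hlaw₃ two_pos
      (by linarith) (by linarith)

theorem measure_degrees_le_le_ofReal_rpow_mul_prod_lintegral (hB₁ : Measurable B₁)
    (hB₂ : Measurable B₂) (hZ₃ : Measurable Z₃) (hindep : iIndepFun ![B₁, B₂, Z₃] P)
    (hlaw₁ : P.map B₁ = _root_.betaMeasure 1 2) (hlaw₂ : P.map B₂ = _root_.betaMeasure 3 1)
    (hlaw₃ : P.map Z₃ = genGammaMeasure 5 2) {p ε : ℝ} (hp : 0 ≤ p) (hε : 0 < ε) :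
    P {ω | (B₁ ω * B₂ ω * Z₃ ω) * ((1 - B₁ ω) * B₂ ω * Z₃ ω) ^ 2 ≤ ε ∧
        (B₁ ω * B₂ ω * Z₃ ω) ^ 2 * ((1 - B₁ ω) * B₂ ω * Z₃ ω) ≤ ε}
      ≤ ENNReal.ofReal ((2 * ε) ^ p) * ∏ i, ∫⁻ ω, negMomentWeight p i (![B₁, B₂, Z₃] i ω) ∂P := by
  set E := {ω | (B₁ ω * B₂ ω * Z₃ ω) * ((1 - B₁ ω) * B₂ ω * Z₃ ω) ^ 2 ≤ ε ∧
    (B₁ ω * B₂ ω * Z₃ ω) ^ 2 * ((1 - B₁ ω) * B₂ ω * Z₃ ω) ≤ ε}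
  set G := {ω | B₁ ω ∈ Ioo 0 1 ∧ 0 < B₂ ω ∧ 0 < Z₃ ω}
  have hG : ∀ᵐ ω ∂P, ω ∈ G := by
    filter_upwards [ae_mem_of_map_eq_withDensity hB₁.aemeasurable measurableSet_Ioo hlaw₁
        fun x hx => if_neg hx,
      ae_mem_of_map_eq_withDensity hB₂.aemeasurable measurableSet_Ioi hlaw₂
        fun x hx => if_neg fun h => hx h.1,
      ae_mem_of_map_eq_withDensity hZ₃.aemeasurable measurableSet_Ioi hlaw₃
        fun x hx => if_neg hx] with ω h₁ h₂ h₃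
    exact ⟨h₁, h₂, h₃⟩
  calc P E ≤ P (E ∩ G) := measure_mono_ae (hG.mono fun ω hω hE => ⟨hE, hω⟩)
    _ = ENNReal.ofReal ((2 * ε) ^ p) * (ENNReal.ofReal ((2 * ε) ^ (-p)) * P (E ∩ G)) := by
      rw [← mul_assoc, ← ENNReal.ofReal_mul (by positivity), ← Real.rpow_add (by positivity),
        add_neg_cancel, Real.rpow_zero, ENNReal.ofReal_one, one_mul]
    _ ≤ _ := by
      gcongr
      exact mul_measure_le_prod_lintegral_of_iIndepFun hindep
        (fun i => by fin_cases i <;> assumption) (measurable_negMomentWeight p)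
        fun ω ⟨hE, hb, hy, hz⟩ =>
          ofReal_rpow_neg_two_mul_le_prod_negMomentWeight hb hy hz hp hE.1 hE.2

end Degrees

/-- For every `η ∈ (0,1)` there is `ε₀ > 0` so that for all `ε ∈ (0,ε₀)`,
`P(D₁D₂² ≤ ε ∧ D₁²D₂ ≤ ε) ≤ ε^(1-η)`, where `D₁ = B₁B₂Z₃` and `D₂ = (1-B₁)B₂Z₃`. -/
theorem adam_or_eve_large {Ω : Type*} [MeasurableSpace Ω] (P : Measure Ω) [IsProbabilityMeasure P]
    (B₁ B₂ Z₃ : Ω → ℝ) (hB₁ : Measurable B₁) (hB₂ : Measurable B₂) (hZ₃ : Measurable Z₃)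
    (hindep : iIndepFun ![B₁, B₂, Z₃] P)
    (hlaw₁ : P.map B₁ = _root_.betaMeasure 1 2)
    (hlaw₂ : P.map B₂ = _root_.betaMeasure 3 1)
    (hlaw₃ : P.map Z₃ = genGammaMeasure 5 2) :
    ∀ η : ℝ, 0 < η → η < 1 → ∃ ε₀ : ℝ, 0 < ε₀ ∧ ∀ ε : ℝ, 0 < ε → ε < ε₀ →
      P {ω | (B₁ ω * B₂ ω * Z₃ ω) * ((1 - B₁ ω) * B₂ ω * Z₃ ω) ^ 2 ≤ ε ∧
             (B₁ ω * B₂ ω * Z₃ ω) ^ 2 * ((1 - B₁ ω) * B₂ ω * Z₃ ω) ≤ ε}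
        ≤ ENNReal.ofReal (ε ^ ((1 : ℝ) - η)) := by
  intro η hη hη1
  obtain ⟨p, hηp, hp1⟩ := exists_between (show 1 - η < 1 by linarith)
  have hp : 0 ≤ p := by linarith
  set M := ∏ i, ∫⁻ ω, negMomentWeight p i (![B₁, B₂, Z₃] i ω) ∂P
  have hM : M ≠ ⊤ :=
    prod_lintegral_negMomentWeight_ne_top hB₁ hB₂ hZ₃ hlaw₁ hlaw₂ hlaw₃ hp hp1
  obtain ⟨ε₀, hε₀, hsmall⟩ := (nhdsGT_basis (0 : ℝ)).eventually_iff.mp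
    (eventually_mul_rpow_le_rpow (2 ^ p * M.toReal) hηp)
  refine ⟨ε₀, hε₀, fun ε hε hεε₀ => ?_⟩
  calc _ ≤ ENNReal.ofReal ((2 * ε) ^ p) * M :=
        measure_degrees_le_le_ofReal_rpow_mul_prod_lintegral hB₁ hB₂ hZ₃ hindep hlaw₁ hlaw₂ hlaw₃
          hp hε
    _ = ENNReal.ofReal (2 ^ p * M.toReal * ε ^ p) := by
        rw [← ENNReal.ofReal_toReal hM, ← ENNReal.ofReal_mul (by positivity),
          Real.mul_rpow zero_le_two hε.le, ENNReal.toReal_ofReal ENNReal.toReal_nonneg]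
        congr 1; ring
    _ ≤ ENNReal.ofReal (ε ^ (1 - η)) := ENNReal.ofReal_le_ofReal (hsmall ⟨hε, hεε₀⟩)
end

section
/- There exists a constant C > 0 such that for every integer i ≥ 2 and every real A > 8: if B and Z are independent random variables with B ~ β(2i−3, 1) and Z ~ GG(2i−1, 2), then P(Z·(1−B) ≥ A/√i) ≤ C · exp(−A^{2/3}). -/
open MeasureTheory ProbabilityTheory Real Filter

/-! By a union bound, with `p = A^{1/3}` the event `Z(1-B) ≥ A/√i = (√i p)(p²/i)` lies, up to the
null events `Z ≤ 0` and `B ≥ 1`, in `{Z ≥ √i p} ∪ {B ≤ 1 - p²/i}`. Comparing `e^{-x²}` with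
`e^{-a²/2} e^{-x²/2}` on `x ≥ a` gives the tail `P(Z ≥ a) ≤ e^{-a²/2} 2^{i-1/2}`, which is
`≤ e^{2-p²}` at `a = √i p`. Since `P(B ≤ c) ≤ c^{2i-3}` and `1 - s ≤ e^{-s}`, the second event
has probability at most `e^{-(2i-3)p²/i} ≤ e^{-p²}` when `p² < i` (so `i ≥ 3`), and is null
otherwise. -/

open Set ENNReal

lemma withDensity_apply_eq_zero_of_eqOn {α : Type*} [MeasurableSpace α] {μ : Measure α}
    {f : α → ℝ≥0∞} {s : Set α} (hs : MeasurableSet s) (hf : EqOn f 0 s) :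
    μ.withDensity f s = 0 := by
  rw [withDensity_apply _ hs, setLIntegral_congr_fun hs hf, Pi.zero_def, lintegral_zero]

lemma betaMeasure_Iic_eq_zero (u v : ℝ) {c : ℝ} (hc : c ≤ 0) :
    _root_.betaMeasure u v (Iic c) = 0 :=
  withDensity_apply_eq_zero_of_eqOn measurableSet_Iic fun x hx => by
    simp [_root_.betaPDFReal, (mem_Iic.mp hx).trans hc |>.not_gt]

lemma betaMeasure_Ici_one_eq_zero (u v : ℝ) : _root_.betaMeasure u v (Ici 1) = 0 :=
  withDensity_apply_eq_zero_of_eqOn measurableSet_Ici fun x hx => by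
    simp [_root_.betaPDFReal, (mem_Ici.mp hx).not_gt]

lemma genGammaMeasure_Iic_zero_eq_zero (u v : ℝ) : genGammaMeasure u v (Iic 0) = 0 :=
  withDensity_apply_eq_zero_of_eqOn measurableSet_Iic fun x hx => by
    simp [genGammaPDFReal, (mem_Iic.mp hx).not_gt]

lemma betaPDFReal_one_le {u x : ℝ} (hu : 0 < u) (hx : 0 < x) :
    _root_.betaPDFReal u 1 x ≤ u * x ^ (u - 1) := by
  unfold _root_.betaPDFReal
  split_ifs with hx1
  · rw [Real.Gamma_add_one hu.ne', Real.Gamma_one, sub_self, Real.rpow_zero]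
    have := Real.Gamma_pos_of_pos hu
    field_simp
    rfl
  · positivity

lemma betaMeasure_one_Iic_le {u c : ℝ} (hu : 0 < u) (hc : 0 ≤ c) :
    _root_.betaMeasure u 1 (Iic c) ≤ ENNReal.ofReal (c ^ u) := by
  have hint : IntegrableOn (fun x => u * x ^ (u - 1)) (Ioc 0 c) :=
    ((intervalIntegrable_iff_integrableOn_Ioc_of_le hc).mp
      (intervalIntegral.intervalIntegrable_rpow' (by linarith))).const_mul u
  have hprimitive : ∫ x in Ioc 0 c, u * x ^ (u - 1) = c ^ u := by
    rw [← intervalIntegral.integral_of_le hc, intervalIntegral.integral_const_mul,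
      integral_rpow (Or.inl (by linarith)), sub_add_cancel, Real.zero_rpow hu.ne', sub_zero]
    field_simp
  calc _root_.betaMeasure u 1 (Iic c)
      = ∫⁻ x in Iic c, ENNReal.ofReal (_root_.betaPDFReal u 1 x) :=
        withDensity_apply _ measurableSet_Iic
    _ ≤ ∫⁻ x in Iic c, (Ioi 0).indicator (fun x => ENNReal.ofReal (u * x ^ (u - 1))) x := by
        refine lintegral_mono fun x => ?_
        rcases le_or_gt x 0 with hx | hx
        · simp [_root_.betaPDFReal, hx.not_gt]
        · simpa [indicator_of_mem (mem_Ioi.mpr hx)] using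
            ENNReal.ofReal_le_ofReal (betaPDFReal_one_le hu hx)
    _ = ENNReal.ofReal (c ^ u) := by
        rw [lintegral_indicator measurableSet_Ioi, Measure.restrict_restrict measurableSet_Ioi,
          Ioi_inter_Iic, ← hprimitive, ofReal_integral_eq_lintegral_ofReal hint
            (ae_restrict_of_forall_mem measurableSet_Ioc fun x hx => by
              have := hx.1; positivity)]

lemma betaMeasure_one_Iic_one_sub_le {u : ℝ} (hu : 0 < u) (s : ℝ) :
    _root_.betaMeasure u 1 (Iic (1 - s)) ≤ ENNReal.ofReal (Real.exp (-(u * s))) := by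
  rcases le_or_gt 1 s with hs1 | hs1
  · simp [betaMeasure_Iic_eq_zero u 1 (by linarith : 1 - s ≤ 0)]
  refine (betaMeasure_one_Iic_le hu (by linarith)).trans (ENNReal.ofReal_le_ofReal ?_)
  calc (1 - s) ^ u ≤ Real.exp (-s) ^ u :=
        Real.rpow_le_rpow (by linarith) (by linarith [Real.add_one_le_exp (-s)]) hu.le
    _ = Real.exp (-(u * s)) := by rw [← Real.exp_mul]; ring_nf

lemma genGammaPDFReal_le_of_le {u v a x : ℝ} (hu : 0 < u) (hv : 0 < v) (ha : 0 < a)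
    (hax : a ≤ x) :
    genGammaPDFReal u v x ≤
      Real.exp (-(a ^ v) / 2) * (v / Real.Gamma (u / v) * (x ^ (u - 1) * Real.exp (-2⁻¹ * x ^ v))) := by
  have hx : 0 < x := ha.trans_le hax
  have hexp : Real.exp (-(x ^ v)) ≤ Real.exp (-(a ^ v) / 2) * Real.exp (-2⁻¹ * x ^ v) := by
    rw [← Real.exp_add, Real.exp_le_exp]
    linarith [Real.rpow_le_rpow ha.le hax hv.le]
  have hconst : 0 ≤ v / Real.Gamma (u / v) * x ^ (u - 1) :=
    by have := Real.Gamma_pos_of_pos (div_pos hu hv); positivity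
  rw [genGammaPDFReal, if_pos hx]
  calc v / Real.Gamma (u / v) * x ^ (u - 1) * Real.exp (-(x ^ v))
      ≤ v / Real.Gamma (u / v) * x ^ (u - 1) * (Real.exp (-(a ^ v) / 2) * Real.exp (-2⁻¹ * x ^ v)) :=
        mul_le_mul_of_nonneg_left hexp hconst
    _ = _ := by ring

lemma integral_genGammaPDF_mul_exp_half {u v : ℝ} (hu : 0 < u) (hv : 0 < v) :
    ∫ x in Ioi 0, v / Real.Gamma (u / v) * (x ^ (u - 1) * Real.exp (-2⁻¹ * x ^ v)) =
      2 ^ (u / v) := by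
  rw [integral_const_mul, integral_rpow_mul_exp_neg_mul_rpow hv (by linarith) (by norm_num),
    sub_add_cancel, Real.inv_rpow (by norm_num), ← Real.rpow_neg (by norm_num), neg_div, neg_neg]
  have := Real.Gamma_pos_of_pos (div_pos hu hv)
  field_simp

lemma genGammaMeasure_Ici_le {u v a : ℝ} (hu : 0 < u) (hv : 0 < v) (ha : 0 < a) :
    genGammaMeasure u v (Ici a) ≤ ENNReal.ofReal (Real.exp (-(a ^ v) / 2) * 2 ^ (u / v)) := by
  set g : ℝ → ℝ := fun x => v / Real.Gamma (u / v) * (x ^ (u - 1) * Real.exp (-2⁻¹ * x ^ v))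
  have hg : IntegrableOn g (Ioi 0) :=
    (integrableOn_rpow_mul_exp_neg_mul_rpow (by linarith) hv (by norm_num)).const_mul _
  have hg_nonneg : 0 ≤ᵐ[volume.restrict (Ioi 0)] g :=
    ae_restrict_of_forall_mem measurableSet_Ioi fun x hx => by
      have := Real.Gamma_pos_of_pos (div_pos hu hv)
      have := mem_Ioi.mp hx
      positivity
  calc genGammaMeasure u v (Ici a)
      = ∫⁻ x in Ici a, ENNReal.ofReal (genGammaPDFReal u v x) :=
        withDensity_apply _ measurableSet_Ici
    _ ≤ ∫⁻ x in Ici a, ENNReal.ofReal (Real.exp (-(a ^ v) / 2) * g x) :=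
        setLIntegral_mono' measurableSet_Ici fun x hx =>
          ENNReal.ofReal_le_ofReal (genGammaPDFReal_le_of_le hu hv ha hx)
    _ ≤ ∫⁻ x in Ioi 0, ENNReal.ofReal (Real.exp (-(a ^ v) / 2) * g x) :=
        lintegral_mono_set fun x hx => ha.trans_le hx
    _ = ENNReal.ofReal (Real.exp (-(a ^ v) / 2) * 2 ^ (u / v)) := by
        rw [← ofReal_integral_eq_lintegral_ofReal (hg.const_mul _)
          (hg_nonneg.mono fun x hx => mul_nonneg (Real.exp_nonneg _) hx),
          integral_const_mul, integral_genGammaPDF_mul_exp_half hu hv]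

lemma genGammaMeasure_Ici_sqrt_mul_le {i p : ℝ} (hi : 2 ≤ i) (hp : 0 < p) (hp2 : 2 ≤ p ^ 2) :
    genGammaMeasure (2 * i - 1) 2 (Ici (√i * p)) ≤
      ENNReal.ofReal (Real.exp 2 * Real.exp (-p ^ 2)) := by
  refine (genGammaMeasure_Ici_le (by linarith) two_pos (by positivity)).trans
    (ENNReal.ofReal_le_ofReal ?_)
  have hsq : (√i * p) ^ (2 : ℝ) = i * p ^ 2 := by
    rw [Real.rpow_two, mul_pow, Real.sq_sqrt (by linarith)]
  have hlog : Real.log 2 < 1 := Real.log_two_lt_d9.trans (by norm_num)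
  rw [hsq, Real.rpow_def_of_pos two_pos, ← Real.exp_add, ← Real.exp_add, Real.exp_le_exp]
  nlinarith [Real.log_pos one_lt_two]

lemma betaMeasure_Iic_one_sub_div_le {i t : ℝ} (hi : 0 < i) (ht : 3 ≤ t) :
    _root_.betaMeasure (2 * i - 3) 1 (Iic (1 - t / i)) ≤ ENNReal.ofReal (Real.exp (-t)) := by
  rcases le_or_gt i t with hit | hti
  · have hc : 1 - t / i ≤ 0 := by rw [sub_nonpos, le_div_iff₀ hi]; linarith
    simp [betaMeasure_Iic_eq_zero _ 1 hc]
  refine (betaMeasure_one_Iic_one_sub_le (by linarith) _).trans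
    (ENNReal.ofReal_le_ofReal (Real.exp_le_exp.mpr ?_))
  rw [neg_le_neg_iff, ← mul_div_assoc, le_div_iff₀ hi]
  nlinarith

lemma measure_le_mul_one_sub_le {Ω : Type*} [MeasurableSpace Ω] (P : Measure Ω) {B Z : Ω → ℝ}
    (hB : Measurable B) (hZ : Measurable Z) (a s : ℝ) :
    P {ω | a * s ≤ Z ω * (1 - B ω)} ≤
      P.map Z (Ici a) + P.map B (Iic (1 - s)) + (P.map Z (Iic 0) + P.map B (Ici 1)) := by
  have hsub : {ω | a * s ≤ Z ω * (1 - B ω)} ⊆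
      Z ⁻¹' Ici a ∪ B ⁻¹' Iic (1 - s) ∪ (Z ⁻¹' Iic 0 ∪ B ⁻¹' Ici 1) := by
    intro ω hω
    by_contra! h
    simp only [mem_union, mem_preimage, mem_Ici, mem_Iic, not_or, not_le] at h
    exact (mul_lt_mul'' h.1.1 (by linarith [h.1.2]) h.2.1.le (by linarith [h.2.2])).not_ge hω
  rw [Measure.map_apply hZ measurableSet_Ici, Measure.map_apply hB measurableSet_Iic,
    Measure.map_apply hZ measurableSet_Iic, Measure.map_apply hB measurableSet_Ici]
  exact (measure_mono hsub).trans ((measure_union_le _ _).trans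
    (add_le_add (measure_union_le _ _) (measure_union_le _ _)))

/-- Uniform upper deviation bound for the limit degree: there is `C > 0` such that for every
`i ≥ 2`, `A > 8` and independent `B ~ β(2i-3, 1)`, `Z ~ GG(2i-1, 2)`,
`P(Z(1-B) ≥ A/√i) ≤ C * exp(-A^(2/3))`. -/
theorem limit_degree_upper_deviation :
    ∃ C : ℝ, 0 < C ∧ ∀ (i : ℕ), 2 ≤ i → ∀ A : ℝ, 8 < A →
      ∀ (Ω : Type) (_ : MeasurableSpace Ω) (P : Measure Ω), IsProbabilityMeasure P →
      ∀ (B Z : Ω → ℝ), Measurable B → Measurable Z → IndepFun B Z P →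
        P.map B = _root_.betaMeasure (2 * (i : ℝ) - 3) 1 →
        P.map Z = genGammaMeasure (2 * (i : ℝ) - 1) 2 →
        P {ω | A / Real.sqrt i ≤ Z ω * (1 - B ω)}
          ≤ ENNReal.ofReal (C * Real.exp (-(A ^ ((2 : ℝ) / 3)))) := by
  refine ⟨Real.exp 2 + 1, by positivity, fun i hi A hA Ω _ P _ B Z hB hZ _ hBlaw hZlaw => ?_⟩
  have hi2 : (2 : ℝ) ≤ i := by exact_mod_cast hi
  set p := A ^ ((1 : ℝ) / 3) with hp_def
  have hp0 : 0 < p := by positivity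
  have hp3 : p ^ 3 = A := by
    rw [← Real.rpow_natCast, ← Real.rpow_mul (by linarith)]; norm_num
  have hp2 : A ^ ((2 : ℝ) / 3) = p ^ 2 := by
    rw [← Real.rpow_natCast, ← Real.rpow_mul (by linarith)]; norm_num
  have hp4 : 4 ≤ p ^ 2 := by nlinarith
  have hsplit : A / √i = (√i * p) * (p ^ 2 / i) := by
    have := Real.sq_sqrt (by linarith : (0 : ℝ) ≤ i)
    have : 0 < √i := by positivity
    rw [← hp3]; field_simp; nlinarith
  calc P {ω | A / √i ≤ Z ω * (1 - B ω)}
      ≤ genGammaMeasure (2 * i - 1) 2 (Ici (√i * p)) +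
          _root_.betaMeasure (2 * i - 3) 1 (Iic (1 - p ^ 2 / i)) := by
        simpa [hsplit, hZlaw, hBlaw, genGammaMeasure_Iic_zero_eq_zero,
          betaMeasure_Ici_one_eq_zero] using measure_le_mul_one_sub_le P hB hZ _ _
    _ ≤ ENNReal.ofReal (Real.exp 2 * Real.exp (-p ^ 2)) + ENNReal.ofReal (Real.exp (-p ^ 2)) :=
        add_le_add (genGammaMeasure_Ici_sqrt_mul_le hi2 hp0 (by linarith))
          (betaMeasure_Iic_one_sub_div_le (by linarith) (by linarith))
    _ = ENNReal.ofReal ((Real.exp 2 + 1) * Real.exp (-A ^ ((2 : ℝ) / 3))) := by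
        rw [hp2, ← ENNReal.ofReal_add (by positivity) (by positivity)]; ring_nf
end

section
/- There exists a constant C > 0 such that for every integer i ≥ 1 and every real A ≥ 8: if Z is a random variable with law GG(2i−1, 2), then P(Z ≥ A^{1/3}·√i) ≤ C · exp(−A^{2/3}). -/
open MeasureTheory ProbabilityTheory Real Filter

/-!
The bound holds with `C = 1`. For `x ≥ t` and `u - 2 ≤ t²` the function
`x ^ (u - 2) * exp (-x² / 2)` is decreasing, so on `[t, ∞)` the density of `GG(u, 2)` is at most
`2 / Γ(u/2) · t^(u-2) e^(-t²/2) · x e^(-x²/2)`, whose integral is explicit: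
`P(Z ≥ t) ≤ 2 t^(u-2) e^(-t²) / Γ(u/2)`. For `u = 2i - 1` and `t² = s i` with `s = A^(2/3) ≥ 4`,
this reduces the claim to the Stirling-type bound `2 (s i)^(i-3/2) e^(-(i-1)s) ≤ Γ(i - 1/2)`.
Its left side decreases in `s`, and at `s = 4` it follows by induction on `i` from
`Γ(a + 1) = a Γ(a)` and `e³ ≥ 16`.
-/

open Set Topology

lemma rpow_le_rpow_mul_exp {t x c d : ℝ} (ht : 0 < t) (hx : t ≤ x) (hcd : c ≤ d)
    (hd : 0 ≤ d) :
    x ^ c ≤ t ^ c * exp (d * (x / t - 1)) := by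
  have hxt : 1 ≤ x / t := (one_le_div ht).mpr hx
  have hx0 : 0 < x := ht.trans_le hx
  calc x ^ c = t ^ c * (x / t) ^ c := by
        rw [← mul_rpow ht.le (div_pos hx0 ht).le, mul_div_cancel₀ x ht.ne']
    _ ≤ t ^ c * exp (d * (x / t - 1)) := by
        gcongr
        calc (x / t) ^ c ≤ (x / t) ^ d := rpow_le_rpow_of_exponent_le hxt hcd
          _ ≤ exp (x / t - 1) ^ d := by
              gcongr
              linarith [add_one_le_exp (x / t - 1)]
          _ = exp (d * (x / t - 1)) := by rw [← exp_mul, mul_comm]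

lemma rpow_mul_exp_neg_sq_div_two_le {t x c : ℝ} (ht : 0 < t) (hc : c ≤ t ^ 2) (hx : t ≤ x) :
    x ^ c * exp (-(x ^ 2 / 2)) ≤ t ^ c * exp (-(t ^ 2 / 2)) := by
  calc x ^ c * exp (-(x ^ 2 / 2))
      ≤ t ^ c * exp (t ^ 2 * (x / t - 1)) * exp (-(x ^ 2 / 2)) := by
        gcongr; exact rpow_le_rpow_mul_exp ht hx hc (sq_nonneg t)
    _ = t ^ c * exp (-(t ^ 2 / 2) - (x - t) ^ 2 / 2) := by
        rw [mul_assoc, ← exp_add]; congr 2; field_simp; ring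
    _ ≤ t ^ c * exp (-(t ^ 2 / 2)) := by gcongr; nlinarith [sq_nonneg (x - t)]

lemma sixteen_le_exp_three : 16 ≤ exp 3 := by
  calc (16 : ℝ) ≤ 2.7182818283 ^ 3 := by norm_num
    _ ≤ exp 1 ^ 3 := by gcongr; exact exp_one_gt_d9.le
    _ = exp 3 := by rw [← exp_nat_mul]; norm_num

lemma two_mul_four_mul_rpow_mul_exp_le_Gamma {i : ℕ} (hi : 1 ≤ i) :
    2 * (4 * i) ^ ((i : ℝ) - 3 / 2) * exp (-(4 * ((i : ℝ) - 1))) ≤ Gamma (i - 1 / 2) := by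
  induction i, hi using Nat.le_induction with
  | base =>
    have hfour : (4 : ℝ) ^ (-(1 / 2 : ℝ)) = 1 / 2 := by
      rw [rpow_neg (by norm_num), show (4 : ℝ) = 2 ^ (2 : ℝ) by norm_num,
        ← rpow_mul (by norm_num)]
      norm_num
    norm_num [hfour, Gamma_one_half_eq]
    linarith [pi_gt_three]
  | succ i hi ih =>
    have hi1 : (1 : ℝ) ≤ i := by exact_mod_cast hi
    have hΓ : Gamma ((i : ℝ) + 1 - 1 / 2) = (i - 1 / 2) * Gamma (i - 1 / 2) := by
      rw [show (i : ℝ) + 1 - 1 / 2 = (i - 1 / 2) + 1 by ring, Gamma_add_one (by linarith)]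
    have hpow : (4 * ((i : ℝ) + 1)) ^ ((i : ℝ) + 1 - 3 / 2)
        ≤ (4 * i) ^ ((i : ℝ) - 3 / 2) * exp 1 * (4 * (i + 1)) := by
      rw [show (i : ℝ) + 1 - 3 / 2 = (i - 3 / 2) + 1 by ring, rpow_add_one (by positivity)]
      gcongr
      calc (4 * ((i : ℝ) + 1)) ^ ((i : ℝ) - 3 / 2)
          ≤ (4 * i) ^ ((i : ℝ) - 3 / 2) * exp (i * (4 * (i + 1) / (4 * i) - 1)) :=
            rpow_le_rpow_mul_exp (by positivity) (by linarith) (by linarith) (by positivity)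
        _ = (4 * i) ^ ((i : ℝ) - 3 / 2) * exp 1 := by congr 2; field_simp; ring
    have hexp :
        exp 1 * exp (-(4 * ((i : ℝ) + 1 - 1))) = exp (-(4 * ((i : ℝ) - 1))) / exp 3 := by
      rw [eq_div_iff (exp_pos 3).ne', ← exp_add, ← exp_add]; ring_nf
    have hratio : 4 * ((i : ℝ) + 1) / exp 3 ≤ i - 1 / 2 := by
      rw [div_le_iff₀ (exp_pos 3)]
      nlinarith [sixteen_le_exp_three]
    push_cast
    calc 2 * (4 * ((i : ℝ) + 1)) ^ ((i : ℝ) + 1 - 3 / 2) * exp (-(4 * ((i : ℝ) + 1 - 1)))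
        ≤ 2 * ((4 * i) ^ ((i : ℝ) - 3 / 2) * exp 1 * (4 * (i + 1)))
            * exp (-(4 * ((i : ℝ) + 1 - 1))) := by gcongr
      _ = 4 * ((i : ℝ) + 1) / exp 3
            * (2 * (4 * i) ^ ((i : ℝ) - 3 / 2) * exp (-(4 * ((i : ℝ) - 1)))) := by
          linear_combination 2 * (4 * (i : ℝ)) ^ ((i : ℝ) - 3 / 2) * (4 * (i + 1)) * hexp
      _ ≤ (i - 1 / 2) * Gamma (i - 1 / 2) := by gcongr; linarith
      _ = Gamma ((i : ℝ) + 1 - 1 / 2) := hΓ.symm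

lemma two_mul_rpow_mul_exp_le_Gamma {i : ℕ} (hi : 1 ≤ i) {s : ℝ} (hs : 4 ≤ s) :
    2 * (s * i) ^ ((i : ℝ) - 3 / 2) * exp (-((i - 1) * s)) ≤ Gamma (i - 1 / 2) := by
  have hi1 : (1 : ℝ) ≤ i := by exact_mod_cast hi
  calc 2 * (s * i) ^ ((i : ℝ) - 3 / 2) * exp (-((i - 1) * s))
      ≤ 2 * ((4 * i) ^ ((i : ℝ) - 3 / 2) * exp (4 * (i - 1) * (s * i / (4 * i) - 1)))
          * exp (-((i - 1) * s)) := by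
        gcongr
        exact rpow_le_rpow_mul_exp (by positivity) (by gcongr) (by linarith) (by linarith)
    _ = 2 * (4 * i) ^ ((i : ℝ) - 3 / 2) * exp (-(4 * ((i : ℝ) - 1))) := by
        have hexponent : 4 * ((i : ℝ) - 1) * (s * i / (4 * i) - 1) + -((i - 1) * s)
            = -(4 * ((i : ℝ) - 1)) := by field_simp; ring
        rw [← hexponent, exp_add]; ring
    _ ≤ Gamma (i - 1 / 2) := two_mul_four_mul_rpow_mul_exp_le_Gamma hi

lemma lintegral_Ici_mul_exp_neg_sq_div_two {t : ℝ} (ht : 0 ≤ t) :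
    ∫⁻ x in Ici t, ENNReal.ofReal (x * exp (-(x ^ 2 / 2)))
      = ENNReal.ofReal (exp (-(t ^ 2 / 2))) := by
  have hderiv : ∀ x ∈ Ici t,
      HasDerivAt (fun y => -exp (-(y ^ 2 / 2))) (x * exp (-(x ^ 2 / 2))) x := fun x _ => by
    have hexponent : HasDerivAt (fun y : ℝ => -(y ^ 2 / 2)) (-x) x :=
      ((hasDerivAt_pow 2 x).div_const 2).fun_neg.congr_deriv (by ring)
    exact hexponent.exp.fun_neg.congr_deriv (by ring)
  have hnonneg : ∀ x ∈ Ioi t, 0 ≤ x * exp (-(x ^ 2 / 2)) := fun x hx =>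
    mul_nonneg (ht.trans hx.out.le) (exp_pos _).le
  have hlim : Tendsto (fun y => -exp (-(y ^ 2 / 2))) atTop (𝓝 0) := by
    simpa using (tendsto_exp_atBot.comp (tendsto_neg_atBot_iff.mpr
      ((tendsto_pow_atTop two_ne_zero).atTop_div_const two_pos))).neg
  rw [setLIntegral_congr Ioi_ae_eq_Ici.symm,
    ← ofReal_integral_eq_lintegral_ofReal (integrableOn_Ioi_deriv_of_nonneg' hderiv hnonneg hlim)
      ((ae_restrict_iff' measurableSet_Ioi).mpr (ae_of_all _ hnonneg)),
    integral_Ioi_of_hasDerivAt_of_nonneg' hderiv hnonneg hlim]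
  simp

lemma lintegral_Ici_rpow_mul_exp_neg_sq_le {u t : ℝ} (ht : 0 < t) (hut : u - 2 ≤ t ^ 2) :
    ∫⁻ x in Ici t, ENNReal.ofReal (x ^ (u - 1) * exp (-x ^ 2))
      ≤ ENNReal.ofReal (t ^ (u - 2) * exp (-t ^ 2)) := by
  have hpointwise : ∀ x ∈ Ici t, x ^ (u - 1) * exp (-x ^ 2)
      ≤ t ^ (u - 2) * exp (-(t ^ 2 / 2)) * (x * exp (-(x ^ 2 / 2))) := fun x hx => by
    have hx0 : 0 < x := ht.trans_le hx
    calc x ^ (u - 1) * exp (-x ^ 2)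
        = x ^ (u - 2) * exp (-(x ^ 2 / 2)) * (x * exp (-(x ^ 2 / 2))) := by
          rw [show u - 1 = u - 2 + 1 by ring, rpow_add_one hx0.ne', mul_mul_mul_comm, ← exp_add]
          ring_nf
      _ ≤ t ^ (u - 2) * exp (-(t ^ 2 / 2)) * (x * exp (-(x ^ 2 / 2))) := by
          gcongr ?_ * _; exact rpow_mul_exp_neg_sq_div_two_le ht hut hx
  calc ∫⁻ x in Ici t, ENNReal.ofReal (x ^ (u - 1) * exp (-x ^ 2))
      ≤ ∫⁻ x in Ici t, ENNReal.ofReal (t ^ (u - 2) * exp (-(t ^ 2 / 2)))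
          * ENNReal.ofReal (x * exp (-(x ^ 2 / 2))) :=
        setLIntegral_mono (by fun_prop) fun x hx => by
          rw [← ENNReal.ofReal_mul (by positivity)]
          exact ENNReal.ofReal_le_ofReal (hpointwise x hx)
    _ = ENNReal.ofReal (t ^ (u - 2) * exp (-t ^ 2)) := by
        rw [lintegral_const_mul _ (by fun_prop), lintegral_Ici_mul_exp_neg_sq_div_two ht.le,
          ← ENNReal.ofReal_mul (by positivity), mul_assoc, ← exp_add]
        ring_nf

lemma genGammaMeasure_two_Ici_le {u t : ℝ} (ht : 0 < t) (hut : u - 2 ≤ t ^ 2) :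
    genGammaMeasure u 2 (Ici t)
      ≤ ENNReal.ofReal (2 / Gamma (u / 2) * t ^ (u - 2) * exp (-t ^ 2)) := by
  rw [genGammaMeasure, withDensity_apply _ measurableSet_Ici]
  calc ∫⁻ x in Ici t, ENNReal.ofReal (genGammaPDFReal u 2 x)
      = ∫⁻ x in Ici t, ENNReal.ofReal (2 / Gamma (u / 2))
          * ENNReal.ofReal (x ^ (u - 1) * exp (-x ^ 2)) :=
        setLIntegral_congr_fun measurableSet_Ici fun x hx => by
          have hx0 : 0 < x := ht.trans_le hx
          rw [genGammaPDFReal, if_pos hx0, rpow_two, mul_assoc,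
            ENNReal.ofReal_mul' (by positivity)]
    _ ≤ ENNReal.ofReal (2 / Gamma (u / 2)) * ENNReal.ofReal (t ^ (u - 2) * exp (-t ^ 2)) := by
        rw [lintegral_const_mul _ (by fun_prop)]
        gcongr
        exact lintegral_Ici_rpow_mul_exp_neg_sq_le ht hut
    _ = ENNReal.ofReal (2 / Gamma (u / 2) * t ^ (u - 2) * exp (-t ^ 2)) := by
        rw [mul_assoc, ← ENNReal.ofReal_mul' (by positivity)]

lemma genGammaMeasure_Ici_sqrt_le {i : ℕ} (hi : 1 ≤ i) {s : ℝ} (hs : 4 ≤ s) :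
    genGammaMeasure (2 * i - 1) 2 (Ici √(s * i)) ≤ ENNReal.ofReal (exp (-s)) := by
  have hi1 : (1 : ℝ) ≤ i := by exact_mod_cast hi
  have hsi : 0 < s * i := by positivity
  have hsq : √(s * i) ^ 2 = s * i := sq_sqrt hsi.le
  have hpow : √(s * i) ^ ((2 * i - 1 : ℝ) - 2) = (s * i) ^ ((i : ℝ) - 3 / 2) := by
    rw [sqrt_eq_rpow, ← rpow_mul hsi.le]; ring_nf
  have hΓ : 0 < Gamma (i - 1 / 2) := Gamma_pos_of_pos (by linarith)
  refine (genGammaMeasure_two_Ici_le (sqrt_pos.mpr hsi) (by nlinarith)).trans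
    (ENNReal.ofReal_le_ofReal ?_)
  rw [hsq, hpow, show (2 * i - 1 : ℝ) / 2 = i - 1 / 2 by ring, div_mul_eq_mul_div,
    div_mul_eq_mul_div, div_le_iff₀ hΓ]
  calc 2 * (s * i) ^ ((i : ℝ) - 3 / 2) * exp (-(s * i))
      = 2 * (s * i) ^ ((i : ℝ) - 3 / 2) * exp (-((i - 1) * s)) * exp (-s) := by
        rw [mul_assoc _ (exp _), ← exp_add]; ring_nf
    _ ≤ Gamma (i - 1 / 2) * exp (-s) := by gcongr; exact two_mul_rpow_mul_exp_le_Gamma hi hs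
    _ = exp (-s) * Gamma (i - 1 / 2) := mul_comm _ _

/-- There is `C > 0` such that for every `i ≥ 1`, `A ≥ 8` and `Z ~ GG(2i-1, 2)`,
`P(Z ≥ A^(1/3) √i) ≤ C * exp(-A^(2/3))`. -/
theorem genGamma_tail_bound :
    ∃ C : ℝ, 0 < C ∧ ∀ (i : ℕ), 1 ≤ i → ∀ A : ℝ, 8 ≤ A →
      ∀ (Ω : Type) (_ : MeasurableSpace Ω) (P : Measure Ω), IsProbabilityMeasure P →
      ∀ (Z : Ω → ℝ), Measurable Z → P.map Z = genGammaMeasure (2 * (i : ℝ) - 1) 2 →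
        P {ω | A ^ ((1 : ℝ) / 3) * Real.sqrt i ≤ Z ω}
          ≤ ENNReal.ofReal (C * Real.exp (-(A ^ ((2 : ℝ) / 3)))) := by
  refine ⟨1, one_pos, fun i hi A hA Ω _ P _ Z hZ hmap => ?_⟩
  have hA0 : 0 ≤ A := by linarith
  have hs : 4 ≤ A ^ ((2 : ℝ) / 3) := by
    calc (4 : ℝ) = 8 ^ ((2 : ℝ) / 3) := by
          rw [show (8 : ℝ) = 2 ^ (3 : ℝ) by norm_num, ← rpow_mul (by norm_num)]; norm_num
      _ ≤ A ^ ((2 : ℝ) / 3) := by gcongr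
  have ht : A ^ ((1 : ℝ) / 3) * √i = √(A ^ ((2 : ℝ) / 3) * i) := by
    rw [sqrt_mul (by positivity)]
    congr 1
    rw [sqrt_eq_rpow, ← rpow_mul hA0]; norm_num
  calc P {ω | A ^ ((1 : ℝ) / 3) * √i ≤ Z ω}
      = P.map Z (Ici √(A ^ ((2 : ℝ) / 3) * i)) := by
        rw [Measure.map_apply hZ measurableSet_Ici, ht]; rfl
    _ ≤ ENNReal.ofReal (1 * exp (-(A ^ ((2 : ℝ) / 3)))) := by
        rw [hmap, one_mul]; exact genGammaMeasure_Ici_sqrt_le hi hs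
end

section
/- For every integer i ≥ 1: i^{i−1} ≤ e^i · Γ((2i−1)/2) / √(2π). -/
open Real Nat

lemma sqrt_pi_le_stirlingSeq (n : ℕ) : Real.sqrt π ≤ Stirling.stirlingSeq (n + 1) := by
  refine le_of_tendsto Stirling.tendsto_stirlingSeq_sqrt_pi ?_
  filter_upwards [Filter.eventually_ge_atTop (n + 1)] with m hm
  obtain ⟨k, rfl⟩ : ∃ k, m = k + 1 := ⟨m - 1, by omega⟩
  have h : (Stirling.stirlingSeq ∘ Nat.succ) k ≤ (Stirling.stirlingSeq ∘ Nat.succ) n :=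
    Stirling.stirlingSeq'_antitone (by omega)
  simpa using h

lemma stirling_lower (n : ℕ) (hn : 1 ≤ n) :
    Real.sqrt π * (Real.sqrt (2 * n) * ((n : ℝ) / Real.exp 1) ^ n) ≤ n ! := by
  obtain ⟨k, rfl⟩ : ∃ k, n = k + 1 := ⟨n - 1, by omega⟩
  have h := sqrt_pi_le_stirlingSeq k
  rw [Stirling.stirlingSeq, le_div_iff₀ (by positivity)] at h
  linarith [h]

lemma gamma_mid_sq_le {a b : ℝ} (ha : 0 < a) (hb : 0 < b) :
    Real.Gamma ((a + b) / 2) ^ 2 ≤ Real.Gamma a * Real.Gamma b := by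
  have h := Real.convexOn_log_Gamma.2 (Set.mem_Ioi.2 ha) (Set.mem_Ioi.2 hb)
    (by norm_num : (0:ℝ) ≤ 1/2) (by norm_num : (0:ℝ) ≤ 1/2) (by norm_num)
  simp only [Function.comp, smul_eq_mul] at h
  have hm : 0 < (a + b) / 2 := by linarith
  have hGa := Real.Gamma_pos_of_pos ha
  have hGb := Real.Gamma_pos_of_pos hb
  have hGm := Real.Gamma_pos_of_pos hm
  rw [← Real.log_le_log_iff (by positivity) (by positivity), Real.log_pow,
    Real.log_mul (ne_of_gt hGa) (ne_of_gt hGb)]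
  have heq : (1:ℝ)/2 * a + 1/2 * b = (a + b) / 2 := by ring
  rw [heq] at h
  push_cast
  linarith

set_option maxHeartbeats 1000000 in
/-- Stirling-type bound: for every integer `i ≥ 1`, `i^{i-1} ≤ e^i Γ((2i-1)/2) / √(2π)`. -/
theorem pow_le_exp_mul_Gamma (i : ℕ) (hi : 1 ≤ i) :
    (i : ℝ) ^ (i - 1) ≤ Real.exp i * Real.Gamma ((2 * (i : ℝ) - 1) / 2) / Real.sqrt (2 * Real.pi) := by
  obtain ⟨n, rfl⟩ : ∃ n, i = n + 1 := ⟨i - 1, by omega⟩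
  set x : ℝ := (n : ℝ) + 1 with hx
  have hx1 : (1:ℝ) ≤ x := by
    have := Nat.cast_nonneg (α := ℝ) n; rw [hx]; linarith
  have hxpos : (0:ℝ) < x := by linarith
  have hxm : (0:ℝ) < x - 1/2 := by linarith
  have hxp : (0:ℝ) < x + 1/2 := by linarith
  have hGx := Real.Gamma_pos_of_pos hxpos
  have hGm := Real.Gamma_pos_of_pos hxm
  have hGp := Real.Gamma_pos_of_pos hxp
  -- Γ(x)^2 ≤ Γ(x-1/2) Γ(x+1/2)
  have h1 : Real.Gamma x ^ 2 ≤ Real.Gamma (x - 1/2) * Real.Gamma (x + 1/2) := by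
    have h := gamma_mid_sq_le hxm hxp
    have heq : (x - 1/2 + (x + 1/2)) / 2 = x := by ring
    rwa [heq] at h
  -- Γ(x+1/2)^2 ≤ x Γ(x)^2
  have h2 : Real.Gamma (x + 1/2) ^ 2 ≤ x * Real.Gamma x ^ 2 := by
    have h := gamma_mid_sq_le hxpos (by linarith : (0:ℝ) < x + 1)
    have heq : (x + (x + 1)) / 2 = x + 1/2 := by ring
    rw [heq, Real.Gamma_add_one (ne_of_gt hxpos)] at h
    nlinarith [h]
  have hsxpos : (0:ℝ) < Real.sqrt x := Real.sqrt_pos.mpr hxpos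
  have hxx : Real.sqrt x * Real.sqrt x = x := Real.mul_self_sqrt hxpos.le
  -- Γ(x+1/2) ≤ √x Γ(x)
  have h3 : Real.Gamma (x + 1/2) ≤ Real.sqrt x * Real.Gamma x := by
    nlinarith [sq_nonneg (Real.Gamma (x + 1/2) - Real.sqrt x * Real.Gamma x),
      mul_pos hsxpos hGx]
  -- Γ(x) ≤ √x Γ(x-1/2)
  have h4 : Real.Gamma x ≤ Real.sqrt x * Real.Gamma (x - 1/2) := by
    nlinarith [mul_le_mul_of_nonneg_left h3 hGm.le]
  -- Γ(x) = n!
  have hGfac : Real.Gamma x = n ! := by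
    rw [hx]; exact_mod_cast Real.Gamma_nat_eq_factorial n
  -- Stirling lower bound for (n+1)!
  have hEpos : (0:ℝ) < Real.exp 1 ^ (n+1) := by positivity
  have h5 := stirling_lower (n + 1) (by omega)
  have hcast : ((n+1)! : ℝ) = x * n ! := by
    rw [Nat.factorial_succ]; push_cast [hx]; ring
  rw [hcast] at h5
  push_cast at h5
  rw [← hx] at h5
  rw [Real.sqrt_mul (by norm_num : (0:ℝ) ≤ 2), div_pow, pow_succ] at h5
  -- h5 : √π * (√2 * √x * (x^n * x / e^(n+1))) ≤ x * n!
  have h6 : Real.sqrt (2*π) * Real.sqrt x * x ^ n ≤ (n ! : ℝ) * Real.exp 1 ^ (n+1) := by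
    rw [Real.sqrt_mul (by norm_num : (0:ℝ) ≤ 2)]
    have h5' := mul_le_mul_of_nonneg_right h5 hEpos.le
    have h5'' : Real.sqrt π * (Real.sqrt 2 * Real.sqrt x * (x ^ n * x)) ≤
        x * n ! * Real.exp 1 ^ (n+1) := by
      calc Real.sqrt π * (Real.sqrt 2 * Real.sqrt x * (x ^ n * x))
          = Real.sqrt π * (Real.sqrt 2 * Real.sqrt x * (x ^ n * x / Real.exp 1 ^ (n+1))) *
              Real.exp 1 ^ (n+1) := by field_simp
        _ ≤ x * n ! * Real.exp 1 ^ (n+1) := h5'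
    have h7 : Real.sqrt 2 * Real.sqrt π * Real.sqrt x * x ^ n * x ≤
        (n ! : ℝ) * Real.exp 1 ^ (n+1) * x := by
      have e1 : Real.sqrt 2 * Real.sqrt π * Real.sqrt x * x ^ n * x =
          Real.sqrt π * (Real.sqrt 2 * Real.sqrt x * (x ^ n * x)) := by ring
      have e2 : (n ! : ℝ) * Real.exp 1 ^ (n+1) * x = x * n ! * Real.exp 1 ^ (n+1) := by ring
      rw [e1, e2]; exact h5''
    exact le_of_mul_le_mul_right h7 hxpos
  -- key : √(2π) x^n ≤ Γ(x-1/2) e^(n+1)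
  have hkey : Real.sqrt (2*π) * x ^ n ≤ Real.Gamma (x - 1/2) * Real.exp 1 ^ (n+1) := by
    have h8 : (n ! : ℝ) ≤ Real.sqrt x * Real.Gamma (x - 1/2) := by rw [← hGfac]; exact h4
    have h9 : Real.sqrt (2*π) * Real.sqrt x * x ^ n ≤
        Real.sqrt x * Real.Gamma (x - 1/2) * Real.exp 1 ^ (n+1) :=
      h6.trans (mul_le_mul_of_nonneg_right h8 hEpos.le)
    have h10 : Real.sqrt (2*π) * x ^ n * Real.sqrt x ≤
        Real.Gamma (x - 1/2) * Real.exp 1 ^ (n+1) * Real.sqrt x := by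
      have e1 : Real.sqrt (2*π) * x ^ n * Real.sqrt x =
          Real.sqrt (2*π) * Real.sqrt x * x ^ n := by ring
      have e2 : Real.Gamma (x - 1/2) * Real.exp 1 ^ (n+1) * Real.sqrt x =
          Real.sqrt x * Real.Gamma (x - 1/2) * Real.exp 1 ^ (n+1) := by ring
      rw [e1, e2]; exact h9
    exact le_of_mul_le_mul_right h10 hsxpos
  -- finish
  have hE : Real.exp ((n : ℝ) + 1) = Real.exp 1 ^ (n+1) := by
    rw [← Real.exp_nat_mul]; norm_num
  have hexp : (n + 1 - 1 : ℕ) = n := by omega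
  rw [hexp]
  push_cast
  rw [← hx]
  have harg : (2 * x - 1) / 2 = x - 1/2 := by ring
  rw [harg, le_div_iff₀ (by positivity : (0:ℝ) < Real.sqrt (2*π))]
  calc x ^ n * Real.sqrt (2*π) = Real.sqrt (2*π) * x ^ n := by ring
    _ ≤ Real.Gamma (x - 1/2) * Real.exp 1 ^ (n+1) := hkey
    _ = Real.exp x * Real.Gamma (x - 1/2) := by rw [hx, hE]; ring
end

section
/- Let i ≥ 1 be an integer, A ≥ 8 a real number, and x a real number with x ≥ A^{1/3}·√i. Then x^{2i−2}·e^{−x²} ≤ (A^{1/3}·√i)^{2i−2} · e^{−A^{2/3}·i} · e^{−4(x − A^{1/3}·√i)}. -/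
/-!
Put `c = A^{1/3} √i` and `n = 2i - 2`. The tangent line of the concave function `log` at `c` gives
`x^n ≤ c^n e^{n(x-c)/c}`, which reduces the claim to the quadratic inequality
`n(x-c)/c - x² ≤ -c² - 4(x-c)`, i.e. `(x-c)(n/c + 4 - x - c) ≤ 0`. For `x ≥ c` this holds once
`n + 4c ≤ 2c²`, and that follows from `c ≥ 2√i` (because `A^{1/3} ≥ 8^{1/3} = 2`) and `√i ≥ 1`.
-/

open Real

lemma pow_le_pow_mul_exp {c x : ℝ} (hc : 0 < c) (hx : 0 ≤ x) (n : ℕ) :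
    x ^ n ≤ c ^ n * exp (n * ((x - c) / c)) := by
  have htangent : x / c ≤ exp ((x - c) / c) := by
    rw [sub_div, div_self hc.ne']
    simpa using add_one_le_exp (x / c - 1)
  calc x ^ n = c ^ n * (x / c) ^ n := by
        rw [div_pow, mul_div_cancel₀ _ (pow_ne_zero n hc.ne')]
    _ ≤ c ^ n * exp ((x - c) / c) ^ n := by gcongr
    _ = c ^ n * exp (n * ((x - c) / c)) := by rw [exp_nat_mul]

/-- `hslope` says that the concave function `n log x - x²` has slope `n/c - 2c ≤ -s` at `c`. -/
lemma pow_mul_exp_neg_sq_le {c x s : ℝ} {n : ℕ} (hc : 0 < c) (hcx : c ≤ x)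
    (hslope : n + s * c ≤ 2 * c ^ 2) :
    x ^ n * exp (-x ^ 2) ≤ c ^ n * exp (-c ^ 2) * exp (-(s * (x - c))) := by
  have hexponent : n * ((x - c) / c) - x ^ 2 ≤ -c ^ 2 - s * (x - c) := by
    have hn : (n : ℝ) / c ≤ x + c - s := by
      rw [div_le_iff₀ hc]; nlinarith
    have := mul_le_mul_of_nonneg_right hn (sub_nonneg.mpr hcx)
    rw [div_mul_eq_mul_div, mul_div_assoc] at this
    nlinarith
  calc x ^ n * exp (-x ^ 2)
      ≤ c ^ n * exp (n * ((x - c) / c)) * exp (-x ^ 2) := by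
        gcongr; exact pow_le_pow_mul_exp hc (hc.le.trans hcx) n
    _ = c ^ n * exp (n * ((x - c) / c) - x ^ 2) := by
        rw [mul_assoc, ← exp_add, ← sub_eq_add_neg]
    _ ≤ c ^ n * exp (-c ^ 2 - s * (x - c)) := by gcongr
    _ = c ^ n * exp (-c ^ 2) * exp (-(s * (x - c))) := by
        rw [mul_assoc, ← exp_add, ← sub_eq_add_neg]

lemma two_le_rpow_one_third {A : ℝ} (hA : 8 ≤ A) : 2 ≤ A ^ ((1 : ℝ) / 3) := by
  rw [one_div, le_rpow_inv_iff_of_pos (by norm_num) (by linarith) (by norm_num)]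
  norm_num [hA]

lemma rpow_one_third_sq {A : ℝ} (hA : 0 ≤ A) : (A ^ ((1 : ℝ) / 3)) ^ 2 = A ^ ((2 : ℝ) / 3) := by
  rw [← rpow_natCast, ← rpow_mul hA]
  norm_num

lemma two_mul_sq_sub_two_add_four_mul_le {t c : ℝ} (ht : 1 ≤ t) (hc : 2 * t ≤ c) :
    2 * t ^ 2 - 2 + 4 * c ≤ 2 * c ^ 2 := by
  nlinarith

/-- Pointwise bound on the generalized Gamma density: for `i ≥ 1`, `A ≥ 8` and
`x ≥ A^{1/3} √i`, one has `x^{2i-2} e^{-x²} ≤ (A^{1/3} √i)^{2i-2} e^{-A^{2/3} i} e^{-4(x - A^{1/3}√i)}`. -/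
theorem density_tail_bound (i : ℕ) (hi : 1 ≤ i) (A x : ℝ) (hA : 8 ≤ A)
    (hx : A ^ ((1 : ℝ) / 3) * Real.sqrt i ≤ x) :
    x ^ (2 * i - 2) * Real.exp (-x ^ 2) ≤
      (A ^ ((1 : ℝ) / 3) * Real.sqrt i) ^ (2 * i - 2) * Real.exp (-(A ^ ((2 : ℝ) / 3) * i)) *
        Real.exp (-(4 * (x - A ^ ((1 : ℝ) / 3) * Real.sqrt i))) := by
  set c := A ^ ((1 : ℝ) / 3) * √i
  have hsqrt : 1 ≤ √(i : ℝ) := one_le_sqrt.mpr (by exact_mod_cast hi)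
  have hc : 2 * √i ≤ c := mul_le_mul_of_nonneg_right (two_le_rpow_one_third hA) (sqrt_nonneg _)
  have hc_sq : c ^ 2 = A ^ ((2 : ℝ) / 3) * i := by
    rw [mul_pow, rpow_one_third_sq (by linarith), sq_sqrt (Nat.cast_nonneg i)]
  have hslope : ((2 * i - 2 : ℕ) : ℝ) + 4 * c ≤ 2 * c ^ 2 := by
    have := two_mul_sq_sub_two_add_four_mul_le hsqrt hc
    rwa [sq_sqrt (Nat.cast_nonneg i), ← Nat.cast_ofNat, ← Nat.cast_mul, ← Nat.cast_sub (by omega)]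
      at this
  rw [← hc_sq]
  exact pow_mul_exp_neg_sq_le (by linarith) hx hslope
end
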